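/- arXiv:1307.0539 — 5 statements merged into one kernel-verified Lean document; each statement's English description precedes it below -/
import Mathlib

section
/- (No-survivor theorem) Assume G is connected, E_neg is nonempty, α ∈ (0,1), β > 0, and p_ij + p_ji > 0 for every {i,j} ∈ E. Fix a deterministic initial vector x⁰ ∈ ℝⁿ and assume almost sure belief divergence, i.e., ℙ(limsup_{k→∞} max_{i,j∈V} |x_i(k) − x_j(k)| = ∞) = 1. Then for every pair of distinct nodes i ≠ j ∈ V, ℙ(limsup_{k→∞} |x_i(k) − x_j(k)| = ∞) = 1. -/
open Matrix MeasureTheory Filter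
open scoped ENNReal

noncomputable section

namespace SignedOpinion

/-- The vector `e i - e j` in `ℝⁿ`. -/
def esub {n : ℕ} (i j : Fin n) : Fin n → ℝ :=
  fun k => (if k = i then (1 : ℝ) else 0) - (if k = j then (1 : ℝ) else 0)

/-- The rank-one matrix `(e i - e j) (e i - e j)ᵀ`. -/
def dmatAux {n : ℕ} (i j : Fin n) : Matrix (Fin n) (Fin n) ℝ :=
  Matrix.vecMulVec (esub i j) (esub i j)

lemma dmatAux_symm {n : ℕ} (i j : Fin n) : dmatAux i j = dmatAux j i := by
  ext a b
  simp only [dmatAux, esub, Matrix.vecMulVec_apply]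
  ring

/-- `(e i - e j)(e i - e j)ᵀ` as a function of the unordered pair `{i, j}`. -/
def dmat {n : ℕ} : Sym2 (Fin n) → Matrix (Fin n) (Fin n) ℝ :=
  Sym2.lift ⟨dmatAux, dmatAux_symm⟩

/-- The averaging matrix `U = 𝟙𝟙ᵀ / n`. -/
def Umat (n : ℕ) : Matrix (Fin n) (Fin n) ℝ :=
  (n : ℝ)⁻¹ • Matrix.of (fun _ _ => (1 : ℝ))

/-- The positive update matrix `W⁺_{ij} = I - α (e i - e j)(e i - e j)ᵀ`. -/
def Wpos {n : ℕ} (α : ℝ) (e : Sym2 (Fin n)) : Matrix (Fin n) (Fin n) ℝ :=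
  1 - α • dmat e

/-- The negative update matrix `W⁻_{ij} = I + β (e i - e j)(e i - e j)ᵀ`. -/
def Wneg {n : ℕ} (β : ℝ) (e : Sym2 (Fin n)) : Matrix (Fin n) (Fin n) ℝ :=
  1 + β • dmat e

/-- The edge selection probability `μ({i,j}) = (p i j + p j i) / n`. -/
def edgeWeight {n : ℕ} (P : Matrix (Fin n) (Fin n) ℝ) : Sym2 (Fin n) → ℝ :=
  Sym2.lift ⟨fun i j => (P i j + P j i) / n, fun i j => by show (P i j + P j i) / n = (P j i + P i j) / n; rw [add_comm (P i j)]⟩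

/-- The weighted Laplacian of the graph on `Fin n` with edge set `Es`,
with weight `edgeWeight P e` on the edge `e`. -/
def lap {n : ℕ} (P : Matrix (Fin n) (Fin n) ℝ) (Es : Finset (Sym2 (Fin n))) :
    Matrix (Fin n) (Fin n) ℝ :=
  ∑ e ∈ Es, edgeWeight P e • dmat e

/-- The unit-weight (standard) Laplacian of the graph with edge set `Es`. -/
def lapStd {n : ℕ} (Es : Finset (Sym2 (Fin n))) : Matrix (Fin n) (Fin n) ℝ :=
  ∑ e ∈ Es, dmat e

/-- Largest (real) eigenvalue of a matrix. For a real symmetric matrix this is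
`λ_max`. -/
def lamMax {n : ℕ} (M : Matrix (Fin n) (Fin n) ℝ) : ℝ :=
  sSup {t : ℝ | ∃ v : Fin n → ℝ, v ≠ 0 ∧ M *ᵥ v = t • v}

/-- Smallest (real) eigenvalue of a matrix. -/
def lamMin {n : ℕ} (M : Matrix (Fin n) (Fin n) ℝ) : ℝ :=
  sInf {t : ℝ | ∃ v : Fin n → ℝ, v ≠ 0 ∧ M *ᵥ v = t • v}

/-- Second smallest eigenvalue of a (connected-graph) Laplacian: the smallest
eigenvalue attained by an eigenvector orthogonal to the all-ones vector. -/
def lam2 {n : ℕ} (M : Matrix (Fin n) (Fin n) ℝ) : ℝ :=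
  sInf {t : ℝ | ∃ v : Fin n → ℝ, v ≠ 0 ∧ (∑ i, v i = 0) ∧ M *ᵥ v = t • v}

/-- `P` is row-stochastic. -/
def RowStochastic {n : ℕ} (P : Matrix (Fin n) (Fin n) ℝ) : Prop :=
  (∀ i j, 0 ≤ P i j) ∧ ∀ i, ∑ j, P i j = 1

/-- `P` complies with the graph with edge set `E`. -/
def Complies {n : ℕ} (P : Matrix (Fin n) (Fin n) ℝ) (E : Finset (Sym2 (Fin n))) : Prop :=
  ∀ i j : Fin n, i ≠ j → 0 < P i j → s(i, j) ∈ E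

/-- The simple graph on `Fin n` with edge set `E`. -/
def graphOf {n : ℕ} (E : Finset (Sym2 (Fin n))) : SimpleGraph (Fin n) :=
  SimpleGraph.fromEdgeSet (↑E)

/-- `diam x = max_i x i - min_i x i`  (the quantity `𝔛` of the paper). -/
def diam {n : ℕ} (x : Fin n → ℝ) : ℝ := (⨆ i, x i) - ⨅ i, x i

/-- Selection alphabet `E ∪ {∗}` : an unordered node pair, or no selection. -/
abbrev Sel (n : ℕ) := Option (Sym2 (Fin n))

instance (n : ℕ) : MeasurableSpace (Sel n) := ⊤

/-- The update matrix triggered by a selection. -/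
def Wsel {n : ℕ} (α β : ℝ) (Epst Eneg : Finset (Sym2 (Fin n))) :
    Sel n → Matrix (Fin n) (Fin n) ℝ
  | none => 1
  | some e => if e ∈ Epst then Wpos α e else if e ∈ Eneg then Wneg β e else 1

/-- The belief process `x(k)` driven by the selection sequence `ω`. -/
def xproc {n : ℕ} (α β : ℝ) (Epst Eneg : Finset (Sym2 (Fin n))) (x0 : Fin n → ℝ)
    (ω : ℕ → Sel n) : ℕ → Fin n → ℝ
  | 0 => x0
  | k + 1 => Wsel α β Epst Eneg (ω k) *ᵥ xproc α β Epst Eneg x0 ω k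

/-- The matrix product `W(k) W(k-1) ⋯ W(0)`. -/
def Wprod {n : ℕ} (α β : ℝ) (Epst Eneg : Finset (Sym2 (Fin n))) (ω : ℕ → Sel n) :
    ℕ → Matrix (Fin n) (Fin n) ℝ
  | 0 => Wsel α β Epst Eneg (ω 0)
  | k + 1 => Wsel α β Epst Eneg (ω (k + 1)) * Wprod α β Epst Eneg ω k

/-- The one-step selection distribution `μ` on `E ∪ {∗}`. -/
def seldist {n : ℕ} (P : Matrix (Fin n) (Fin n) ℝ) (E : Finset (Sym2 (Fin n))) :
    Sel n → ℝ≥0∞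
  | none => ENNReal.ofReal (1 - ∑ e ∈ E, edgeWeight P e)
  | some e => if e ∈ E then ENNReal.ofReal (edgeWeight P e) else 0

/-- `ℙ` is the infinite product of `seldist P E`: the coordinates are i.i.d.
with per-coordinate distribution `seldist P E` (characterized on cylinders). -/
def IsIIDSel {n : ℕ} (ℙ : Measure (ℕ → Sel n)) (P : Matrix (Fin n) (Fin n) ℝ)
    (E : Finset (Sym2 (Fin n))) : Prop :=
  ∀ (K : Finset ℕ) (v : ℕ → Sel n),
    ℙ {ω | ∀ k ∈ K, ω k = v k} = ∏ k ∈ K, seldist P E (v k)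

/-- Selection alphabet for the asymmetric constrained model:
an ordered node pair (or `∗`), together with a tag in `{1,2,3}`. -/
abbrev Sel2 (n : ℕ) := Option (Fin n × Fin n) × Fin 3

instance (n : ℕ) : MeasurableSpace (Sel2 n) := ⊤

/-- weights `a, b, c` on the tags. -/
def wabc (a b c : ℝ) : Fin 3 → ℝ := ![a, b, c]

/-- Per-step distribution for the asymmetric constrained model: the pair
`({i,j}, t)` (represented by its ordered representative with `i < j`) has mass
`(wabc a b c t) · μ({i,j})`, and `(∗, t)` has mass `(wabc a b c t) · μ(∗)`. -/
def seldist2 {n : ℕ} (P : Matrix (Fin n) (Fin n) ℝ) (E : Finset (Sym2 (Fin n)))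
    (a b c : ℝ) : Sel2 n → ℝ≥0∞
  | (none, t) => ENNReal.ofReal (wabc a b c t) * ENNReal.ofReal (1 - ∑ e ∈ E, edgeWeight P e)
  | (some (i, j), t) =>
      if i < j ∧ s(i, j) ∈ E then
        ENNReal.ofReal (wabc a b c t) * ENNReal.ofReal (edgeWeight P s(i, j))
      else 0

/-- `ℙ` is the infinite product of `seldist2 P E a b c`. -/
def IsIIDSel2 {n : ℕ} (ℙ : Measure (ℕ → Sel2 n)) (P : Matrix (Fin n) (Fin n) ℝ)
    (E : Finset (Sym2 (Fin n))) (a b c : ℝ) : Prop :=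
  ∀ (K : Finset ℕ) (v : ℕ → Sel2 n),
    ℙ {ω | ∀ k ∈ K, ω k = v k} = ∏ k ∈ K, seldist2 P E a b c (v k)

/-- Projection onto `[-A, A]`. -/
def projA (A z : ℝ) : ℝ := max (-A) (min A z)

/-- `θ(e) = α` on positive edges, `-β` on negative edges. -/
def theta {n : ℕ} (α β : ℝ) (Epst Eneg : Finset (Sym2 (Fin n))) (e : Sym2 (Fin n)) : ℝ :=
  if e ∈ Epst then α else if e ∈ Eneg then -β else 0

/-- One step of the asymmetric constrained update. -/
def cstep {n : ℕ} (α β A : ℝ) (Epst Eneg : Finset (Sym2 (Fin n))) :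
    Sel2 n → (Fin n → ℝ) → (Fin n → ℝ)
  | (none, _), x => x
  | (some (i, j), t), x =>
      if t = 0 then
        Function.update x i
          (projA A ((1 - theta α β Epst Eneg s(i, j)) * x i + theta α β Epst Eneg s(i, j) * x j))
      else if t = 1 then
        Function.update x j
          (projA A ((1 - theta α β Epst Eneg s(i, j)) * x j + theta α β Epst Eneg s(i, j) * x i))
      else
        Function.update
          (Function.update x i
            (projA A ((1 - theta α β Epst Eneg s(i, j)) * x i + theta α β Epst Eneg s(i, j) * x j)))
          j
          (projA A ((1 - theta α β Epst Eneg s(i, j)) * x j + theta α β Epst Eneg s(i, j) * x i))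

/-- The constrained asymmetric belief process. -/
def cproc {n : ℕ} (α β A : ℝ) (Epst Eneg : Finset (Sym2 (Fin n))) (x0 : Fin n → ℝ)
    (ω : ℕ → Sel2 n) : ℕ → Fin n → ℝ
  | 0 => x0
  | k + 1 => cstep α β A Epst Eneg (ω k) (cproc α β A Epst Eneg x0 ω k)

end SignedOpinion

/-!
From any state `x`, a word of at most `n` edge updates makes `|x i - x j| ≥ ρ * diam x`, where
`ρ = (min α β / 2) ^ n / n`: some edge `{u, v}` carries a gap of at least `diam x / n`, and walking
along a path from `v` to `i`, each update passes at least the fraction `min α β / 2` of the current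
gap on to the next pair.

Each such word is selected with probability at least `q ^ n > 0`, where `q` is the smallest edge
selection probability, independently of the past. If
`diam x(k) > (m + 1) / ρ` infinitely often, then at each such time the process gets a fresh
chance, bounded away from zero, to push `|x i - x j|` above `m`; `r` spaced chances all fail with
probability at most `(1 - q ^ n) ^ r`. Hence on the divergence event `|x i - x j|` is almost surely
unbounded.
-/

open Set Topology

section Coordinates

variable {ι A : Type*}

theorem DependsOn.measurable {β : Type*} [MeasurableSpace A] [Countable A]
    [MeasurableSingletonClass A] [MeasurableSpace β] {f : (ι → A) → β} {s : Set ι}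
    (hs : s.Finite) (hf : DependsOn f s) : Measurable f := by
  have := hs.to_subtype
  intro t _
  have hfib : f ⁻¹' t = s.domRestrict ⁻¹' (s.domRestrict '' (f ⁻¹' t)) := by
    refine (subset_preimage_image _ _).antisymm ?_
    rintro ω ⟨ω', hω', hrestr⟩
    rwa [mem_preimage, ← hf fun i hi => congrFun hrestr ⟨i, hi⟩]
  rw [hfib]
  exact measurable_pi_lambda _ (fun i => measurable_pi_apply _) (to_countable _).measurableSet

theorem dependsOn_of_imp {P : (ι → A) → Prop} {s : Set ι}
    (h : ∀ ω ω', (∀ i ∈ s, ω i = ω' i) → P ω → P ω') : DependsOn P s :=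
  fun ω ω' hωω' => propext ⟨h ω ω' hωω', h ω' ω fun i hi => (hωω' i hi).symm⟩

end Coordinates

theorem frequently_lt_of_forall_exists_lt {f : ℕ → ℝ} (h : ∀ C, ∃ k, C < f k) (M : ℝ) :
    ∃ᶠ k in atTop, M < f k := by
  by_contra hfreq
  obtain ⟨K, hK⟩ := eventually_atTop.1 (not_frequently.1 hfreq)
  obtain ⟨C, hC⟩ := ((finite_Iio K).image f).bddAbove
  obtain ⟨k, hk⟩ := h (max M C)
  rcases lt_or_ge k K with hkK | hkK
  · exact hk.not_ge ((hC ⟨k, hkK, rfl⟩).trans (le_max_right M C))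
  · exact hk.not_ge ((not_lt.1 (hK k hkK)).trans (le_max_left M C))

theorem measurableSet_forall_exists_lt {Ω : Type*} [MeasurableSpace Ω] {f : ℕ → Ω → ℝ}
    (hf : ∀ k, Measurable (f k)) : MeasurableSet {ω | ∀ C : ℝ, ∃ k, C < f k ω} := by
  have hset : {ω | ∀ C : ℝ, ∃ k, C < f k ω} = ⋂ m : ℕ, ⋃ k, {ω | (m : ℝ) < f k ω} := by
    ext ω
    simp only [mem_ofPred_eq, mem_iInter, mem_iUnion]
    refine ⟨fun h m => h m, fun h C => ?_⟩
    obtain ⟨m, hm⟩ := exists_nat_ge C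
    obtain ⟨k, hk⟩ := h m
    exact ⟨k, hm.trans_lt hk⟩
  rw [hset]
  exact .iInter fun m => .iUnion fun k => measurableSet_lt measurable_const (hf k)

theorem measure_forall_exists_lt_eq_one {Ω : Type*} [MeasurableSpace Ω] {μ : Measure Ω}
    [IsProbabilityMeasure μ] {A : Set Ω} (hA : MeasurableSet A) (hμA : μ A = 1)
    {f : ℕ → Ω → ℝ} (hf : ∀ m : ℕ, μ (A ∩ {ω | ∀ k, f k ω ≤ m}) = 0) :
    μ {ω | ∀ C : ℝ, ∃ k, C < f k ω} = 1 := by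
  have hcompl : {ω | ∀ C : ℝ, ∃ k, C < f k ω}ᶜ ⊆ Aᶜ ∪ ⋃ m : ℕ, A ∩ {ω | ∀ k, f k ω ≤ m} := by
    intro ω hω
    by_cases hωA : ω ∈ A
    · simp only [mem_compl_iff, mem_ofPred_eq, not_forall, not_exists, not_lt] at hω
      obtain ⟨C, hC⟩ := hω
      obtain ⟨m, hm⟩ := exists_nat_ge C
      exact Or.inr (mem_iUnion.2 ⟨m, hωA, fun k => (hC k).trans hm⟩)
    · exact Or.inl hωA
  have hnull : μ {ω | ∀ C : ℝ, ∃ k, C < f k ω}ᶜ = 0 :=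
    measure_mono_null hcompl <| measure_union_null ((prob_compl_eq_zero_iff hA).2 hμA)
      (measure_iUnion_null hf)
  refine le_antisymm prob_le_one ?_
  simpa [hnull] using measure_univ_le_add_compl (μ := μ) {ω | ∀ C : ℝ, ∃ k, C < f k ω}

theorem pow_le_prod_map {α M : Type*} [CommMonoid M] [PartialOrder M] [IsOrderedMonoid M]
    {q : M} (hq : q ≤ 1) {w : List α} {L : ℕ} (hw : w.length ≤ L) {f : α → M}
    (hf : ∀ a ∈ w, q ≤ f a) : q ^ L ≤ (w.map f).prod :=
  calc q ^ L ≤ q ^ (w.map f).length := by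
        rw [List.length_map]; exact pow_le_pow_right_of_le_one' hq hw
    _ ≤ (w.map f).prod := List.pow_card_le_prod _ q fun a ha => by
        obtain ⟨b, hb, rfl⟩ := List.mem_map.1 ha
        exact hf b hb

theorem SimpleGraph.Walk.sub_le_length_mul {V : Type*} {G : SimpleGraph V} {a b : V}
    (p : G.Walk a b) {x : V → ℝ} {g : ℝ} (hg : ∀ u v, G.Adj u v → |x u - x v| ≤ g) :
    x a - x b ≤ p.length * g := by
  induction p with
  | nil => simp
  | @cons a c b h q ih =>
    rw [SimpleGraph.Walk.length_cons, Nat.cast_succ]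
    linarith [le_abs_self (x a - x c), hg a c h]

theorem SimpleGraph.Connected.exists_adj_forall_abs_sub_le {V : Type*} [Fintype V]
    {G : SimpleGraph V} (hG : G.Connected) {a b : V} (hab : a ≠ b) (x : V → ℝ) :
    ∃ u v, G.Adj u v ∧ ∀ u' v', G.Adj u' v' → |x u' - x v'| ≤ |x u - x v| := by
  classical
  have hne : (Finset.univ.filter fun q : V × V => G.Adj q.1 q.2).Nonempty := by
    obtain ⟨p⟩ := hG.preconnected a b
    cases p with
    | nil => exact absurd rfl hab
    | cons h _ => exact ⟨(a, _), by simpa using h⟩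
  obtain ⟨⟨u, v⟩, huv, hmax⟩ := Finset.exists_max_image _ (fun q => |x q.1 - x q.2|) hne
  exact ⟨u, v, (Finset.mem_filter.1 huv).2, fun u' v' h => hmax (u', v') (by simpa using h)⟩

namespace SignedOpinion

section Trials

variable {A : Type*}

def Follows : ℕ → List A → (ℕ → A) → Prop
  | _, [], _ => True
  | k, a :: w, ω => ω k = a ∧ Follows (k + 1) w ω

theorem dependsOn_follows (k : ℕ) (w : List A) :
    DependsOn (Follows k w) (Iio (k + w.length)) := by
  induction w generalizing k with
  | nil => exact fun _ _ _ => rfl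
  | cons a w ih =>
    intro ω ω' h
    have hk : ω k = ω' k := h k (by simp)
    have htail : Follows (k + 1) w ω = Follows (k + 1) w ω' :=
      ih (k + 1) fun i hi => h i (by simp at hi ⊢; omega)
    simp only [Follows, hk, htail]

theorem dependsOn_follows_of_dependsOn {k L : ℕ} {word : (ℕ → A) → List A}
    (hword : DependsOn word (Iio k)) (hlen : ∀ ω, (word ω).length ≤ L) :
    DependsOn (fun ω => Follows k (word ω) ω) (Iio (k + L)) := by
  intro ω ω' h
  change Follows k (word ω) ω = Follows k (word ω') ω'
  rw [hword fun t ht => h t (by simp at ht ⊢; omega)]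
  exact dependsOn_follows k (word ω') fun t ht => h t (by
    have := hlen ω'
    simp at ht ⊢; omega)

def IsFirstAfter (D : ℕ → (ℕ → A) → Prop) (K k : ℕ) (ω : ℕ → A) : Prop :=
  K ≤ k ∧ D k ω ∧ ∀ t, K ≤ t → t < k → ¬ D t ω

theorem dependsOn_isFirstAfter {D : ℕ → (ℕ → A) → Prop} (hD : ∀ k, DependsOn (D k) (Iio k))
    (K k : ℕ) : DependsOn (IsFirstAfter D K k) (Iio k) :=
  dependsOn_of_imp fun _ _ h ⟨hKk, hDk, hmin⟩ =>
    ⟨hKk, hD k h ▸ hDk, fun t hKt htk => hD t (fun s hs => h s (hs.trans htk)) ▸ hmin t hKt htk⟩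

theorem IsFirstAfter.eq {D : ℕ → (ℕ → A) → Prop} {K k k' : ℕ} {ω : ℕ → A}
    (h : IsFirstAfter D K k ω) (h' : IsFirstAfter D K k' ω) : k = k' := by
  by_contra hne
  rcases lt_or_gt_of_ne hne with hlt | hlt
  exacts [h'.2.2 k h.1 hlt h.2.1, h.2.2 k' h'.1 hlt h'.2.1]

theorem exists_isFirstAfter {D : ℕ → (ℕ → A) → Prop} {K : ℕ} {ω : ℕ → A}
    (h : ∃ k, K ≤ k ∧ D k ω) : ∃ k, IsFirstAfter D K k ω := by
  classical
  exact ⟨Nat.find h, (Nat.find_spec h).1, (Nat.find_spec h).2,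
    fun t hKt htk hDt => Nat.find_min h htk ⟨hKt, hDt⟩⟩

variable [MeasurableSpace A]

def IsIIDCoords (ℙ : Measure (ℕ → A)) (p : A → ℝ≥0∞) : Prop :=
  ∀ (K : Finset ℕ) (v : ℕ → A), ℙ {ω | ∀ k ∈ K, ω k = v k} = ∏ k ∈ K, p (v k)

variable {ℙ : Measure (ℕ → A)} {p : A → ℝ≥0∞}

theorem IsIIDCoords.measure_cylinder_inter_follows (hℙ : IsIIDCoords ℙ p)
    (k : ℕ) (ω₀ : ℕ → A) (w : List A) :
    ℙ ({ω | ∀ t < k, ω t = ω₀ t} ∩ {ω | Follows k w ω})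
      = (∏ t ∈ Finset.range k, p (ω₀ t)) * (w.map p).prod := by
  induction w generalizing k ω₀ with
  | nil => simpa [Follows] using hℙ (Finset.range k) ω₀
  | cons a w ih =>
    have hset : {ω | ∀ t < k, ω t = ω₀ t} ∩ {ω | Follows k (a :: w) ω}
        = {ω | ∀ t < k + 1, ω t = Function.update ω₀ k a t} ∩ {ω | Follows (k + 1) w ω} := by
      ext ω
      simp only [mem_inter_iff, mem_ofPred_eq, Follows, Nat.lt_succ_iff_lt_or_eq]
      constructor
      · rintro ⟨hpre, rfl, hw⟩
        refine ⟨fun t ht => ?_, hw⟩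
        rcases ht with ht | rfl
        · rw [Function.update_of_ne ht.ne, hpre t ht]
        · rw [Function.update_self]
      · rintro ⟨hpre, hw⟩
        refine ⟨fun t ht => ?_, by simpa using hpre k (Or.inr rfl), hw⟩
        rw [hpre t (Or.inl ht), Function.update_of_ne ht.ne]
    have hpre : ∏ t ∈ Finset.range k, p (Function.update ω₀ k a t)
        = ∏ t ∈ Finset.range k, p (ω₀ t) :=
      Finset.prod_congr rfl fun t ht => by rw [Function.update_of_ne (Finset.mem_range.1 ht).ne]
    rw [hset, ih, Finset.prod_range_succ, hpre, Function.update_self, List.map_cons,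
      List.prod_cons, mul_assoc]

variable [Countable A] [MeasurableSingletonClass A] [IsFiniteMeasure ℙ]

theorem IsIIDCoords.measure_cylinder_diff_follows_le (hℙ : IsIIDCoords ℙ p)
    (k : ℕ) (ω₀ : ℕ → A) {w : List A} {c : ℝ≥0∞} (hc : c ≤ (w.map p).prod) :
    ℙ ({ω | ∀ t < k, ω t = ω₀ t} \ {ω | Follows k w ω})
      ≤ (1 - c) * ℙ {ω | ∀ t < k, ω t = ω₀ t} := by
  set C := {ω : ℕ → A | ∀ t < k, ω t = ω₀ t}
  have hC : ℙ C = ∏ t ∈ Finset.range k, p (ω₀ t) := by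
    simpa [Follows] using hℙ.measure_cylinder_inter_follows k ω₀ []
  have hsplit := measure_sdiff_add_inter (μ := ℙ) C
    (measurableSet_setOfPred.2 (DependsOn.measurable (finite_Iio _) (dependsOn_follows k w)))
  calc ℙ (C \ {ω | Follows k w ω})
      = ℙ C - ℙ (C ∩ {ω | Follows k w ω}) := ENNReal.eq_sub_of_add_eq (by finiteness) hsplit
    _ = ℙ C - ℙ C * (w.map p).prod := by rw [hℙ.measure_cylinder_inter_follows, ← hC]
    _ ≤ ℙ C - ℙ C * c := by gcongr
    _ = (1 - c) * ℙ C := by rw [ENNReal.sub_mul fun _ _ => measure_ne_top _ _, one_mul, mul_comm]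

theorem IsIIDCoords.measure_cylinder_inter_not_follows_le (hℙ : IsIIDCoords ℙ p) {k : ℕ}
    {S : (ℕ → A) → Prop} (hS : DependsOn S (Iio k))
    {word : (ℕ → A) → List A} (hword : DependsOn word (Iio k))
    {c : ℝ≥0∞} (hc : ∀ ω, c ≤ ((word ω).map p).prod) (ω₀ : ℕ → A) :
    ℙ ({ω | ∀ t < k, ω t = ω₀ t} ∩ {ω | S ω ∧ ¬ Follows k (word ω) ω})
      ≤ (1 - c) * ℙ ({ω | ∀ t < k, ω t = ω₀ t} ∩ {ω | S ω}) := by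
  have hS₀ {ω : ℕ → A} (h : ∀ t < k, ω t = ω₀ t) : S ω = S ω₀ := hS h
  have hword₀ {ω : ℕ → A} (h : ∀ t < k, ω t = ω₀ t) : word ω = word ω₀ := hword h
  by_cases hω₀ : S ω₀
  · have hS' : {ω | ∀ t < k, ω t = ω₀ t} ∩ {ω | S ω} = {ω | ∀ t < k, ω t = ω₀ t} :=
      inter_eq_left.2 fun ω h => (hS₀ h).mpr hω₀
    have hnf : {ω | ∀ t < k, ω t = ω₀ t} ∩ {ω | S ω ∧ ¬ Follows k (word ω) ω}
        = {ω | ∀ t < k, ω t = ω₀ t} \ {ω | Follows k (word ω₀) ω} := by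
      ext ω
      simp only [mem_inter_iff, Set.mem_sdiff, mem_ofPred_eq]
      constructor
      · rintro ⟨h, -, hnot⟩
        exact ⟨h, hword₀ h ▸ hnot⟩
      · rintro ⟨h, hnot⟩
        exact ⟨h, (hS₀ h).mpr hω₀, (hword₀ h).symm ▸ hnot⟩
    rw [hnf, hS']
    exact hℙ.measure_cylinder_diff_follows_le k ω₀ (hc ω₀)
  · have hempty : {ω | ∀ t < k, ω t = ω₀ t} ∩ {ω | S ω} = ∅ :=
      eq_empty_of_forall_notMem fun ω ⟨h, hSω⟩ => hω₀ ((hS₀ h).mp hSω)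
    refine (measure_mono (t := {ω | ∀ t < k, ω t = ω₀ t} ∩ {ω | S ω}) ?_).trans ?_
    · exact fun ω ⟨h, hSω, _⟩ => ⟨h, hSω⟩
    · rw [hempty, measure_empty]
      exact zero_le

theorem IsIIDCoords.measure_not_follows_le (hℙ : IsIIDCoords ℙ p) {k : ℕ}
    {S : (ℕ → A) → Prop} (hS : DependsOn S (Iio k))
    {word : (ℕ → A) → List A} (hword : DependsOn word (Iio k))
    {c : ℝ≥0∞} (hc : ∀ ω, c ≤ ((word ω).map p).prod) :
    ℙ {ω | S ω ∧ ¬ Follows k (word ω) ω} ≤ (1 - c) * ℙ {ω | S ω} := by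
  set R : (ℕ → A) → (Iio k → A) := (Iio k).domRestrict
  have hcover (T : Set (ℕ → A)) : T = ⋃ u, R ⁻¹' {u} ∩ T := by
    ext ω; simp
  have hfiber (u : Iio k → A) (T : Set (ℕ → A)) :
      (∃ ω₀ : ℕ → A, R ⁻¹' {u} = {ω | ∀ t < k, ω t = ω₀ t}) ∨ R ⁻¹' {u} ∩ T = ∅ := by
    by_cases hu : ∃ ω₀, R ω₀ = u
    · obtain ⟨ω₀, rfl⟩ := hu
      exact Or.inl ⟨ω₀, by ext ω; simp [R, funext_iff]⟩
    · exact Or.inr (eq_empty_of_forall_notMem fun ω ⟨hω, _⟩ => hu ⟨ω, hω⟩)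
  have hterm (u : Iio k → A) : ℙ (R ⁻¹' {u} ∩ {ω | S ω ∧ ¬ Follows k (word ω) ω})
      ≤ (1 - c) * ℙ (R ⁻¹' {u} ∩ {ω | S ω}) := by
    rcases hfiber u {ω | S ω ∧ ¬ Follows k (word ω) ω} with ⟨ω₀, hω₀⟩ | hempty
    · rw [hω₀]
      exact hℙ.measure_cylinder_inter_not_follows_le hS hword hc ω₀
    · simp [hempty]
  have hmeas (u : Iio k → A) : MeasurableSet (R ⁻¹' {u} ∩ {ω | S ω}) :=
    (measurable_pi_lambda _ (fun i => measurable_pi_apply _) (measurableSet_singleton u)).inter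
      (measurableSet_setOfPred.2 (DependsOn.measurable (finite_Iio _) hS))
  calc ℙ {ω | S ω ∧ ¬ Follows k (word ω) ω}
      ≤ ∑' u, ℙ (R ⁻¹' {u} ∩ {ω | S ω ∧ ¬ Follows k (word ω) ω}) := by
        conv_lhs => rw [hcover {ω | S ω ∧ ¬ Follows k (word ω) ω}]
        exact measure_iUnion_le _
    _ ≤ ∑' u, (1 - c) * ℙ (R ⁻¹' {u} ∩ {ω | S ω}) := ENNReal.tsum_le_tsum hterm
    _ = (1 - c) * ℙ {ω | S ω} := by
        rw [ENNReal.tsum_mul_left, ← measure_iUnion _ hmeas, ← hcover]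
        exact fun u v huv => ((pairwiseDisjoint_fiber R univ) trivial trivial huv).mono
          inter_subset_left inter_subset_left

variable {D : ℕ → (ℕ → A) → Prop} {word : ℕ → (ℕ → A) → List A} {L : ℕ} {c : ℝ≥0∞}

theorem IsIIDCoords.measure_never_follows_le_pow (hℙ : IsIIDCoords ℙ p)
    (hD : ∀ k, DependsOn (D k) (Iio k)) (hword : ∀ k, DependsOn (word k) (Iio k))
    (hlen : ∀ k ω, (word k ω).length ≤ L) (hc : ∀ k ω, c ≤ ((word k ω).map p).prod)
    (m : ℕ) (K : ℕ) (S : (ℕ → A) → Prop) (hS : DependsOn S (Iio K)) :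
    ℙ {ω | S ω ∧ (∃ᶠ k in atTop, D k ω) ∧ ∀ k ≥ K, D k ω → ¬ Follows k (word k ω) ω}
      ≤ (1 - c) ^ m * ℙ {ω | S ω} := by
  induction m generalizing K S with
  | zero =>
    rw [pow_zero, one_mul]
    exact measure_mono fun ω h => h.1
  | succ m ih =>
    -- Split according to the first time `k ≥ K` at which `D` holds: the word chosen at `k` is
    -- missed with probability at most `1 - c`, and afterwards the argument restarts at `k + L`.
    set T : ℕ → (ℕ → A) → Prop := fun k ω => S ω ∧ IsFirstAfter D K k ω
    have hT (k : ℕ) : DependsOn (T k) (Iio k) :=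
      dependsOn_of_imp fun _ _ h ⟨hSω, hfirst⟩ =>
        ⟨hS (fun t ht => h t (ht.trans_le hfirst.1)) ▸ hSω,
          dependsOn_isFirstAfter hD K k h ▸ hfirst⟩
    have hTF (k : ℕ) :
        DependsOn (fun ω => T k ω ∧ ¬ Follows k (word k ω) ω) (Iio (k + L)) := by
      intro ω ω' h
      have hF : Follows k (word k ω) ω = Follows k (word k ω') ω' :=
        dependsOn_follows_of_dependsOn (hword k) (hlen k) h
      simp only [hT k fun t ht => h t (by simp at ht ⊢; omega), hF]
    have hTdisj : Pairwise (Function.onFun Disjoint fun k => {ω | T k ω}) :=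
      fun k k' hkk' => disjoint_left.2 fun ω h h' => hkk' (h.2.eq h'.2)
    have hcover :
        {ω | S ω ∧ (∃ᶠ k in atTop, D k ω) ∧ ∀ k ≥ K, D k ω → ¬ Follows k (word k ω) ω}
          ⊆ ⋃ k, {ω | (T k ω ∧ ¬ Follows k (word k ω) ω) ∧ (∃ᶠ k in atTop, D k ω) ∧
              ∀ k' ≥ k + L, D k' ω → ¬ Follows k' (word k' ω) ω} := by
      rintro ω ⟨hSω, hfreq, hnever⟩
      obtain ⟨k, hk⟩ := exists_isFirstAfter (frequently_atTop.1 hfreq K)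
      exact mem_iUnion.2 ⟨k, ⟨⟨hSω, hk⟩, hnever k hk.1 hk.2.1⟩, hfreq,
        fun k' hk' => hnever k' (by have := hk.1; omega)⟩
    have hmeasT (k : ℕ) : MeasurableSet {ω | T k ω} :=
      measurableSet_setOfPred.2 (DependsOn.measurable (finite_Iio _) (hT k))
    calc ℙ {ω | S ω ∧ (∃ᶠ k in atTop, D k ω) ∧ ∀ k ≥ K, D k ω → ¬ Follows k (word k ω) ω}
        ≤ ∑' k, (1 - c) ^ m * ℙ {ω | T k ω ∧ ¬ Follows k (word k ω) ω} :=
          (measure_mono hcover).trans <| (measure_iUnion_le _).trans <|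
            ENNReal.tsum_le_tsum fun k => ih (k + L) _ (hTF k)
      _ ≤ ∑' k, (1 - c) ^ m * ((1 - c) * ℙ {ω | T k ω}) := by
          gcongr with k
          exact hℙ.measure_not_follows_le (hT k) (hword k) (hc k)
      _ = (1 - c) ^ (m + 1) * ℙ (⋃ k, {ω | T k ω}) := by
          rw [measure_iUnion hTdisj hmeasT, ← ENNReal.tsum_mul_left, pow_succ]
          simp only [mul_assoc]
      _ ≤ (1 - c) ^ (m + 1) * ℙ {ω | S ω} := by
          gcongr
          exact iUnion_subset fun k ω hω => hω.1

theorem IsIIDCoords.measure_frequently_never_follows_eq_zero (hℙ : IsIIDCoords ℙ p)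
    (hD : ∀ k, DependsOn (D k) (Iio k)) (hword : ∀ k, DependsOn (word k) (Iio k))
    (hlen : ∀ k ω, (word k ω).length ≤ L) (hc0 : c ≠ 0)
    (hc : ∀ k ω, c ≤ ((word k ω).map p).prod) :
    ℙ {ω | (∃ᶠ k in atTop, D k ω) ∧ ∀ k, D k ω → ¬ Follows k (word k ω) ω} = 0 := by
  have hbound (m : ℕ) :
      ℙ {ω | (∃ᶠ k in atTop, D k ω) ∧ ∀ k, D k ω → ¬ Follows k (word k ω) ω}
        ≤ (1 - c) ^ m * ℙ univ := by
    refine (measure_mono ?_).trans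
      (hℙ.measure_never_follows_le_pow hD hword hlen hc m 0 (fun _ => True) fun _ _ _ => rfl)
    exact fun ω ⟨hfreq, hnever⟩ => ⟨trivial, hfreq, fun k _ => hnever k⟩
  have hlim : Tendsto (fun m => (1 - c) ^ m * ℙ univ) atTop (𝓝 0) := by
    simpa using ENNReal.Tendsto.mul_const (ENNReal.tendsto_pow_atTop_nhds_zero_of_lt_one
      (ENNReal.sub_lt_self ENNReal.one_ne_top one_ne_zero hc0)) (Or.inr (measure_ne_top ℙ univ))
  exact le_antisymm (ge_of_tendsto' hlim hbound) zero_le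

end Trials

section Dynamics

variable {n : ℕ} (α β : ℝ) (Ep En : Finset (Sym2 (Fin n)))

def runEdges (w : List (Sym2 (Fin n))) (x : Fin n → ℝ) : Fin n → ℝ :=
  w.foldl (fun y e => Wsel α β Ep En (some e) *ᵥ y) x

theorem runEdges_append (w₁ w₂ : List (Sym2 (Fin n))) (x : Fin n → ℝ) :
    runEdges α β Ep En (w₁ ++ w₂) x = runEdges α β Ep En w₂ (runEdges α β Ep En w₁ x) :=
  List.foldl_append

theorem xproc_add_length_of_follows (x0 : Fin n → ℝ) (ω : ℕ → Sel n) {k : ℕ}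
    {w : List (Sym2 (Fin n))} (h : Follows k (w.map some) ω) :
    xproc α β Ep En x0 ω (k + w.length) = runEdges α β Ep En w (xproc α β Ep En x0 ω k) := by
  induction w generalizing k with
  | nil => rfl
  | cons e w ih =>
    obtain ⟨hk, hw⟩ := h
    rw [List.length_cons, ← add_assoc, add_right_comm, ih hw]
    simp only [xproc, hk, runEdges, List.foldl_cons]

theorem dependsOn_xproc (x0 : Fin n → ℝ) (k : ℕ) :
    DependsOn (fun ω => xproc α β Ep En x0 ω k) (Iio k) := by
  induction k with
  | zero => exact fun _ _ _ => rfl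
  | succ k ih =>
    intro ω ω' h
    have hprev : xproc α β Ep En x0 ω k = xproc α β Ep En x0 ω' k :=
      ih fun t ht => h t (by simp at ht ⊢; omega)
    simp only [xproc, h k (by simp), hprev]

theorem Wsel_some_mulVec_apply (u v : Fin n) (x : Fin n → ℝ) (k : Fin n) :
    (Wsel α β Ep En (some s(u, v)) *ᵥ x) k
      = x k - theta α β Ep En s(u, v) * (esub u v k * (x u - x v)) := by
  have hW : Wsel α β Ep En (some s(u, v)) = 1 - theta α β Ep En s(u, v) • dmat s(u, v) := by
    by_cases hp : s(u, v) ∈ Ep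
    · simp [Wsel, theta, Wpos, hp]
    · by_cases hn : s(u, v) ∈ En <;> simp [Wsel, theta, Wneg, hp, hn, sub_eq_add_neg]
  have hdot : esub u v ⬝ᵥ x = x u - x v := by
    simp [esub, dotProduct, sub_mul, Finset.sum_sub_distrib]
  simp [hW, Matrix.sub_mulVec, Matrix.smul_mulVec, dmat, dmatAux, Matrix.vecMulVec_mulVec, hdot,
    mul_comm]

variable {α β Ep En}

theorem Wsel_some_mulVec_apply_right {u v : Fin n} (huv : u ≠ v) (x : Fin n → ℝ) :
    (Wsel α β Ep En (some s(u, v)) *ᵥ x) v = x v + theta α β Ep En s(u, v) * (x u - x v) := by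
  rw [Wsel_some_mulVec_apply]
  simp [esub, huv.symm]
  ring

theorem Wsel_some_mulVec_apply_of_ne {u v t : Fin n} (htu : t ≠ u) (htv : t ≠ v)
    (x : Fin n → ℝ) : (Wsel α β Ep En (some s(u, v)) *ᵥ x) t = x t := by
  simp [Wsel_some_mulVec_apply, esub, htu, htv]

theorem min_le_abs_theta (hα : 0 < α) (hβ : 0 < β) {e : Sym2 (Fin n)} (he : e ∈ Ep ∪ En) :
    min α β ≤ |theta α β Ep En e| := by
  unfold theta
  split_ifs with hp hn
  · rw [abs_of_pos hα]; exact min_le_left _ _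
  · rw [abs_neg, abs_of_pos hβ]; exact min_le_right _ _
  · exact absurd (Finset.mem_union.1 he) (by tauto)

theorem exists_edge_push (hα0 : 0 < α) (hα1 : α < 1) (hβ : 0 < β) {u v t : Fin n}
    (he : s(u, v) ∈ Ep ∪ En) (htv : t ≠ v) (x : Fin n → ℝ) {d : ℝ} (hd : 0 ≤ d)
    (hdx : d ≤ |x u - x v|) :
    ∃ w : List (Sym2 (Fin n)), (∀ e ∈ w, e ∈ Ep ∪ En) ∧ w.length ≤ 1 ∧
      min α β / 2 * d ≤ |runEdges α β Ep En w x v - runEdges α β Ep En w x t| := by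
  have hκ : 0 < min α β := lt_min hα0 hβ
  have hκ1 : min α β ≤ 1 := (min_le_left _ _).trans hα1.le
  by_cases hvt : min α β / 2 * d ≤ |x v - x t|
  · exact ⟨[], by simp, by simp, hvt⟩
  push Not at hvt
  have htu : t ≠ u := by
    rintro rfl
    rw [abs_sub_comm] at hdx
    nlinarith
  have huv : u ≠ v := by
    rintro rfl
    simp only [sub_self, abs_zero] at hdx
    nlinarith [abs_nonneg (x u - x t)]
  -- Updating `{u, v}` moves `x v` by `θ * (x u - x v)`, at least `min α β * d`, and fixes `x t`.
  refine ⟨[s(u, v)], by simpa using he, by simp, ?_⟩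
  simp only [runEdges, List.foldl_cons, List.foldl_nil,
    Wsel_some_mulVec_apply_right huv, Wsel_some_mulVec_apply_of_ne htu htv]
  have hpush : min α β * d ≤ |theta α β Ep En s(u, v) * (x u - x v)| := by
    rw [abs_mul]
    exact mul_le_mul (min_le_abs_theta hα0 hβ he) hdx hd (abs_nonneg _)
  have htri := abs_sub_abs_le_abs_sub (theta α β Ep En s(u, v) * (x u - x v)) (x t - x v)
  rw [abs_sub_comm (x t)] at htri
  have : theta α β Ep En s(u, v) * (x u - x v) - (x t - x v)
      = x v + theta α β Ep En s(u, v) * (x u - x v) - x t := by ring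
  rw [this] at htri
  linarith

theorem exists_walk_push (hα0 : 0 < α) (hα1 : α < 1) (hβ : 0 < β) {v z : Fin n}
    (p : (graphOf (Ep ∪ En)).Walk v z) {u : Fin n} (huv : (graphOf (Ep ∪ En)).Adj u v)
    {t : Fin n} (htz : t ≠ z) (x : Fin n → ℝ) {d : ℝ} (hd : 0 ≤ d) (hdx : d ≤ |x u - x v|) :
    ∃ w : List (Sym2 (Fin n)), (∀ e ∈ w, e ∈ Ep ∪ En) ∧ w.length ≤ p.length + 1 ∧
      (min α β / 2) ^ (p.length + 1) * d
        ≤ |runEdges α β Ep En w x z - runEdges α β Ep En w x t| := by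
  have hedge {a b : Fin n} (hab : (graphOf (Ep ∪ En)).Adj a b) : s(a, b) ∈ Ep ∪ En :=
    ((SimpleGraph.fromEdgeSet_adj _).1 hab).1
  induction p generalizing u t x d with
  | nil => simpa using exists_edge_push hα0 hα1 hβ (hedge huv) htz x hd hdx
  | cons hvc q ih =>
    obtain ⟨w₁, hw₁E, hw₁len, hw₁gap⟩ :=
      exists_edge_push hα0 hα1 hβ (hedge huv) hvc.ne.symm x hd hdx
    have hd' : 0 ≤ min α β / 2 * d := by have := lt_min hα0 hβ; positivity
    obtain ⟨w₂, hw₂E, hw₂len, hw₂gap⟩ := ih hvc htz _ hd' hw₁gap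
    refine ⟨w₁ ++ w₂, fun e he => ?_, ?_, ?_⟩
    · rcases List.mem_append.1 he with he | he
      exacts [hw₁E e he, hw₂E e he]
    · simp only [List.length_append, SimpleGraph.Walk.length_cons]
      omega
    · rw [runEdges_append, SimpleGraph.Walk.length_cons, pow_succ, mul_assoc]
      exact hw₂gap

end Dynamics

theorem exists_diam_le {n : ℕ} [Nonempty (Fin n)] (x : Fin n → ℝ) :
    ∃ a b, diam x ≤ x a - x b := by
  obtain ⟨a, ha⟩ := Finite.exists_max x
  obtain ⟨b, hb⟩ := Finite.exists_min x
  exact ⟨a, b, sub_le_sub (ciSup_le ha) (le_ciInf hb)⟩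

theorem exists_word_gap {n : ℕ} {α β : ℝ} {Ep En : Finset (Sym2 (Fin n))}
    (hα0 : 0 < α) (hα1 : α < 1) (hβ : 0 < β)
    (hconn : (graphOf (Ep ∪ En)).Connected) {i j : Fin n} (hij : i ≠ j) (x : Fin n → ℝ) :
    ∃ w : List (Sym2 (Fin n)), (∀ e ∈ w, e ∈ Ep ∪ En) ∧ w.length ≤ n ∧
      (min α β / 2) ^ n / n * diam x
        ≤ |runEdges α β Ep En w x i - runEdges α β Ep En w x j| := by
  have : Nonempty (Fin n) := ⟨i⟩
  have hn : (0 : ℝ) < n := by exact_mod_cast Fin.pos i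
  have hδ : 0 < min α β / 2 := by have := lt_min hα0 hβ; positivity
  have hδ1 : min α β / 2 ≤ 1 := by linarith [min_le_left α β]
  have hpath {a b : Fin n} : ∃ p : (graphOf (Ep ∪ En)).Walk a b, p.length < n := by
    obtain ⟨p⟩ := hconn.preconnected a b
    exact ⟨p.toPath, by simpa using p.toPath.2.length_lt⟩
  obtain ⟨u, v, huv, hmax⟩ := hconn.exists_adj_forall_abs_sub_le hij x
  have hdiam : diam x ≤ n * |x u - x v| := by
    obtain ⟨a, b, hab⟩ := exists_diam_le x
    obtain ⟨p, hp⟩ := hpath (a := a) (b := b)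
    calc diam x ≤ p.length * |x u - x v| := hab.trans (p.sub_le_length_mul hmax)
      _ ≤ n * |x u - x v| := by gcongr
  obtain ⟨q, hq⟩ := hpath (a := v) (b := i)
  obtain ⟨w, hwE, hwlen, hwgap⟩ :=
    exists_walk_push hα0 hα1 hβ q huv hij.symm x (abs_nonneg _) le_rfl
  refine ⟨w, hwE, by omega, ?_⟩
  calc (min α β / 2) ^ n / n * diam x ≤ (min α β / 2) ^ n * |x u - x v| := by
        rw [div_mul_eq_mul_div, div_le_iff₀ hn, mul_assoc, mul_comm _ (n : ℝ)]
        gcongr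
    _ ≤ (min α β / 2) ^ (q.length + 1) * |x u - x v| :=
        mul_le_mul_of_nonneg_right (pow_le_pow_of_le_one hδ.le hδ1 hq) (abs_nonneg _)
    _ ≤ _ := hwgap

instance (n : ℕ) : MeasurableSingletonClass (Sel n) :=
  ⟨fun _ => MeasurableSpace.measurableSet_top⟩

theorem exists_pos_le_seldist {n : ℕ} {P : Matrix (Fin n) (Fin n) ℝ} {E : Finset (Sym2 (Fin n))}
    (hn : 0 < n) (hpw : ∀ i j : Fin n, s(i, j) ∈ E → 0 < P i j + P j i) :
    ∃ q : ℝ≥0∞, 0 < q ∧ q ≤ 1 ∧ ∀ e ∈ E, q ≤ seldist P E (some e) := by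
  refine ⟨min 1 (E.inf fun e => seldist P E (some e)), lt_min one_pos ?_, min_le_left _ _,
    fun e he => (min_le_right _ _).trans (Finset.inf_le he)⟩
  refine (Finset.lt_inf_iff ENNReal.zero_lt_top).2 fun e he => ?_
  induction e using Sym2.ind with
  | _ i j =>
    simp only [seldist, he, if_true, ENNReal.ofReal_pos]
    exact div_pos (hpw i j he) (by exact_mod_cast hn)

theorem measure_unbounded_diam_inter_bounded_gap_eq_zero {n : ℕ}
    {Epst Eneg : Finset (Sym2 (Fin n))} {P : Matrix (Fin n) (Fin n) ℝ}
    (hconn : (graphOf (Epst ∪ Eneg)).Connected)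
    (hpw : ∀ i j : Fin n, s(i, j) ∈ Epst ∪ Eneg → 0 < P i j + P j i)
    {α β : ℝ} (hα0 : 0 < α) (hα1 : α < 1) (hβ : 0 < β)
    {ℙ : Measure (ℕ → Sel n)} [IsFiniteMeasure ℙ] (hiid : IsIIDSel ℙ P (Epst ∪ Eneg))
    (x0 : Fin n → ℝ) {i j : Fin n} (hij : i ≠ j) (m : ℕ) :
    ℙ ({ω | ∀ C : ℝ, ∃ k : ℕ, C < diam (xproc α β Epst Eneg x0 ω k)} ∩
      {ω | ∀ k, |xproc α β Epst Eneg x0 ω k i - xproc α β Epst Eneg x0 ω k j| ≤ m}) = 0 := by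
  have hx (k : ℕ) := dependsOn_xproc α β Epst Eneg x0 k
  choose word hwordE hwordlen hwordgap using
    exists_word_gap (Ep := Epst) (En := Eneg) hα0 hα1 hβ hconn hij
  obtain ⟨q, hq0, hq1, hqE⟩ := exists_pos_le_seldist (Fin.pos i) hpw
  set ρ : ℝ := (min α β / 2) ^ n / n
  have hρ : 0 < ρ := by
    have := lt_min hα0 hβ
    have : (0 : ℝ) < n := by exact_mod_cast Fin.pos i
    positivity
  have hiid' : IsIIDCoords ℙ (seldist P (Epst ∪ Eneg)) := hiid
  refine measure_mono_null ?_ <| hiid'.measure_frequently_never_follows_eq_zero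
      (D := fun k ω => (m + 1) / ρ < diam (xproc α β Epst Eneg x0 ω k))
      (word := fun k ω => (word (xproc α β Epst Eneg x0 ω k)).map some)
      (fun k ω ω' h => congrArg (fun y => (m + 1) / ρ < diam y) (hx k h))
      (fun k ω ω' h => congrArg (fun y => (word y).map some) (hx k h))
      (fun k ω => by simpa using hwordlen _) (pow_ne_zero n hq0.ne')
      (fun k ω => by
        rw [List.map_map]
        exact pow_le_prod_map hq1 (hwordlen _) fun e he => hqE e (hwordE _ e he))
  rintro ω ⟨hdivω, hbdd⟩
  refine ⟨frequently_lt_of_forall_exists_lt hdivω _, fun k hDk hfol => ?_⟩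
  have hgap := hwordgap (xproc α β Epst Eneg x0 ω k)
  rw [← xproc_add_length_of_follows α β Epst Eneg x0 ω hfol] at hgap
  have hρD : (m : ℝ) + 1 < ρ * diam (xproc α β Epst Eneg x0 ω k) := by
    rwa [div_lt_iff₀' hρ] at hDk
  linarith [hbdd (k + (word (xproc α β Epst Eneg x0 ω k)).length)]

theorem no_survivor_general
    (n : ℕ)
    (Epst Eneg : Finset (Sym2 (Fin n)))
    (P : Matrix (Fin n) (Fin n) ℝ)
    (hconn : (graphOf (Epst ∪ Eneg)).Connected)
    (hpw : ∀ i j : Fin n, s(i, j) ∈ Epst ∪ Eneg → 0 < P i j + P j i)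
    (α β : ℝ) (hα0 : 0 < α) (hα1 : α < 1) (hβ : 0 < β)
    (ℙ : Measure (ℕ → Sel n)) [IsProbabilityMeasure ℙ]
    (hiid : IsIIDSel ℙ P (Epst ∪ Eneg))
    (x0 : Fin n → ℝ)
    (hdiv : ℙ {ω | ∀ C : ℝ, ∃ k : ℕ, C < diam (xproc α β Epst Eneg x0 ω k)} = 1) :
    ∀ i j : Fin n, i ≠ j →
      ℙ {ω | ∀ C : ℝ, ∃ k : ℕ,
        C < |xproc α β Epst Eneg x0 ω k i - xproc α β Epst Eneg x0 ω k j|} = 1 := by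
  intro i j hij
  have hmeas : MeasurableSet {ω | ∀ C : ℝ, ∃ k : ℕ, C < diam (xproc α β Epst Eneg x0 ω k)} :=
    measurableSet_forall_exists_lt fun k => DependsOn.measurable (finite_Iio k)
      fun ω ω' h => congrArg diam (dependsOn_xproc α β Epst Eneg x0 k h)
  exact measure_forall_exists_lt_eq_one hmeas hdiv
    (measure_unbounded_diam_inter_bounded_gap_eq_zero hconn hpw hα0 hα1 hβ hiid x0 hij)

theorem no_survivor
    (n : ℕ) (hn : 3 ≤ n)
    (Epst Eneg : Finset (Sym2 (Fin n)))
    (hdisj : Disjoint Epst Eneg)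
    (hloop : ∀ e ∈ Epst ∪ Eneg, ¬ e.IsDiag)
    (P : Matrix (Fin n) (Fin n) ℝ)
    (hP : RowStochastic P)
    (hPc : Complies P (Epst ∪ Eneg))
    (hconn : (graphOf (Epst ∪ Eneg)).Connected)
    (hneg : Eneg.Nonempty)
    (hpw : ∀ i j : Fin n, s(i, j) ∈ Epst ∪ Eneg → 0 < P i j + P j i)
    (α β : ℝ) (hα0 : 0 < α) (hα1 : α < 1) (hβ : 0 < β)
    (ℙ : Measure (ℕ → Sel n)) [IsProbabilityMeasure ℙ]
    (hiid : IsIIDSel ℙ P (Epst ∪ Eneg))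
    (x0 : Fin n → ℝ)
    (hdiv : ℙ {ω | ∀ C : ℝ, ∃ k : ℕ, C < diam (xproc α β Epst Eneg x0 ω k)} = 1) :
    ∀ i j : Fin n, i ≠ j →
      ℙ {ω | ∀ C : ℝ, ∃ k : ℕ,
        C < |xproc α β Epst Eneg x0 ω k i - xproc α β Epst Eneg x0 ω k j|} = 1 :=
  no_survivor_general n Epst Eneg P hconn hpw α β hα0 hα1 hβ ℙ hiid x0 hdiv

end SignedOpinion
end
end

section
/- (Almost-sure divergence for large β) Assume G is connected, E_neg is nonempty, and p_ij + p_ji > 0 for every {i,j} ∈ E. Fix α ∈ (0,1) with α ≠ 1/2. Then there exists β^♯ > 0 such that for every β > β^♯ and every deterministic initial vector x⁰ ∈ ℝⁿ with 𝔛(0) > 0, ℙ(liminf_{k→∞} 𝔛(k) = ∞) = 1. -/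
open Matrix MeasureTheory Filter
open scoped ENNReal

noncomputable section

namespace SignedOpinion

/-!
Every update multiplies the spread `diam` by at least `1 / K` with `K` depending on `α` only,
because the update matrices `1 - θ D` are invertible for `2θ ≠ 1`.
Conversely, from any state some word of `n + 1` updates multiplies `diam` by
`C = (1 + 2β) (α / 2) ^ n / n`: carry a gap of size `diam x / n` along a path to a negative edge
`{i, j}`, losing a factor `α / 2` per edge, then fire `{i, j}`, which multiplies its gap by
`1 + 2β`. Cut time into blocks of `n + 1` steps; in each block the word adapted to the current
state is drawn with probability at least `p ^ (n + 1)` whatever the past. Grouping `J` blocks into a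
superblock with `(1 - p ^ (n + 1)) ^ J ≤ 1 / 16`, a union bound and Borel–Cantelli show that almost
surely, eventually, more than half of all superblocks contain such a word; once
`C ≥ 2 K ^ (2 J (n + 1))`, which is what `β♯` ensures, this forces `diam → ∞`.
-/

open Finset

section Diam

variable {n : ℕ} (x : Fin n → ℝ)

lemma sub_le_diam (i j : Fin n) : x i - x j ≤ diam x :=
  sub_le_sub (le_ciSup (Finite.bddAbove_range x) i) (ciInf_le (Finite.bddBelow_range x) j)

lemma abs_sub_le_diam (i j : Fin n) : |x i - x j| ≤ diam x :=
  abs_sub_le_iff.2 ⟨sub_le_diam x i j, sub_le_diam x j i⟩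

variable [NeZero n]

lemma exists_diam_eq_sub : ∃ u v, diam x = x u - x v := by
  obtain ⟨u, hu⟩ := Finite.exists_max x
  obtain ⟨v, hv⟩ := Finite.exists_min x
  exact ⟨u, v, by rw [diam, le_antisymm (ciSup_le hu) (le_ciSup (Finite.bddAbove_range x) u),
    le_antisymm (ciInf_le (Finite.bddBelow_range x) v) (le_ciInf hv)]⟩

lemma diam_le_of_forall_sub_le {c : ℝ} (h : ∀ i j, x i - x j ≤ c) : diam x ≤ c := by
  obtain ⟨u, v, huv⟩ := exists_diam_eq_sub x
  exact huv ▸ h u v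

lemma diam_nonneg : 0 ≤ diam x := by
  simpa using sub_le_diam x 0 0

end Diam

section Update

variable {n : ℕ}

lemma abs_esub_le_one (a b c : Fin n) : |esub a b c| ≤ 1 := by
  unfold esub; split_ifs <;> norm_num

lemma esub_self (a : Fin n) : esub a a = 0 := by
  ext c; simp [esub]

lemma esub_dotProduct (a b : Fin n) (x : Fin n → ℝ) : esub a b ⬝ᵥ x = x a - x b := by
  simp [esub, dotProduct, sub_mul, Finset.sum_sub_distrib, ite_mul]

lemma dmat_mulVec (a b : Fin n) (x : Fin n → ℝ) :
    dmat s(a, b) *ᵥ x = (x a - x b) • esub a b := by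
  change vecMulVec (esub a b) (esub a b) *ᵥ x = _
  rw [vecMulVec_mulVec, op_smul_eq_smul, esub_dotProduct]

lemma one_sub_smul_dmat_mulVec (θ : ℝ) (a b : Fin n) (x : Fin n → ℝ) :
    (1 - θ • dmat s(a, b)) *ᵥ x = x - (θ * (x a - x b)) • esub a b := by
  rw [Matrix.sub_mulVec, Matrix.one_mulVec, Matrix.smul_mulVec, dmat_mulVec, smul_smul]

lemma diam_update_le [NeZero n] (θ : ℝ) (a b : Fin n) (x : Fin n → ℝ) :
    diam (x - (θ * (x a - x b)) • esub a b) ≤ (1 + 2 * |θ|) * diam x := by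
  refine diam_le_of_forall_sub_le _ fun i j => ?_
  have hij : |esub a b i - esub a b j| ≤ 2 := (abs_sub _ _).trans (by
    linarith [abs_esub_le_one a b i, abs_esub_le_one a b j])
  have hab : |θ * (x a - x b) * (esub a b i - esub a b j)| ≤ |θ| * diam x * 2 := by
    rw [abs_mul, abs_mul]
    exact mul_le_mul (mul_le_mul_of_nonneg_left (abs_sub_le_diam x a b) (abs_nonneg θ)) hij
      (abs_nonneg _) (mul_nonneg (abs_nonneg θ) (diam_nonneg x))
  simp only [Pi.sub_apply, Pi.smul_apply, smul_eq_mul]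
  nlinarith [neg_abs_le (θ * (x a - x b) * (esub a b i - esub a b j)), sub_le_diam x i j]

/-- The inverse of `1 - θ D` is `1 - θ' D` with `θ' = θ / (2θ - 1)`, since `D² = 2D`. -/
lemma diam_le_diam_update [NeZero n] {θ : ℝ} (hθ : 2 * θ ≠ 1) (a b : Fin n) (x : Fin n → ℝ) :
    diam x ≤ (1 + 2 * |θ / (2 * θ - 1)|) * diam (x - (θ * (x a - x b)) • esub a b) := by
  rcases eq_or_ne a b with rfl | hab
  · simp only [esub_self, smul_zero, sub_zero]
    exact le_mul_of_one_le_left (diam_nonneg x) (by linarith [abs_nonneg (θ / (2 * θ - 1))])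
  set y := x - (θ * (x a - x b)) • esub a b
  have hy : y a - y b = (1 - 2 * θ) * (x a - x b) := by
    simp only [y, Pi.sub_apply, Pi.smul_apply, esub, ↓reduceIte, hab, hab.symm, sub_zero,
      smul_eq_mul, mul_one, zero_sub, mul_neg, sub_neg_eq_add]
    ring
  have hx : x = y - (θ / (2 * θ - 1) * (y a - y b)) • esub a b := by
    rw [hy, show θ / (2 * θ - 1) * ((1 - 2 * θ) * (x a - x b)) = -(θ * (x a - x b)) by
      rw [div_mul_eq_mul_div, div_eq_iff (sub_ne_zero.2 hθ)]; ring]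
    simp [y]
  conv_lhs => rw [hx]
  exact diam_update_le _ a b y

end Update

section Dynamics

variable {n : ℕ} {α β : ℝ} {Epst Eneg : Finset (Sym2 (Fin n))}

lemma diam_le_mul_diam_Wsel [NeZero n] (hα : 2 * α ≠ 1) (hβ : 0 ≤ β) (s : Sel n)
    (x : Fin n → ℝ) :
    diam x ≤ (2 + 2 * |α / (2 * α - 1)|) * diam (Wsel α β Epst Eneg s *ᵥ x) := by
  set K := 2 + 2 * |α / (2 * α - 1)|
  have hK : 1 ≤ K := by have := abs_nonneg (α / (2 * α - 1)); linarith
  have hid : diam x ≤ K * diam ((1 : Matrix (Fin n) (Fin n) ℝ) *ᵥ x) := by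
    rw [one_mulVec]; exact le_mul_of_one_le_left (diam_nonneg x) hK
  have hupd : ∀ θ, 2 * θ ≠ 1 → 1 + 2 * |θ / (2 * θ - 1)| ≤ K → ∀ e,
      diam x ≤ K * diam ((1 - θ • dmat e) *ᵥ x) := by
    intro θ hθ hθK e
    induction e using Sym2.ind with
    | _ a b =>
      rw [one_sub_smul_dmat_mulVec]
      exact (diam_le_diam_update hθ a b x).trans
        (mul_le_mul_of_nonneg_right hθK (diam_nonneg _))
  cases s with
  | none => exact hid
  | some e =>
    simp only [Wsel]
    split_ifs
    · exact hupd α hα (by linarith) e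
    · have hβ' : |-β / (2 * -β - 1)| ≤ 1 / 2 := by
        rw [show -β / (2 * -β - 1) = β / (2 * β + 1) by
          rw [show 2 * -β - 1 = -(2 * β + 1) by ring, div_neg, neg_div, neg_neg],
          abs_of_nonneg (by positivity), div_le_iff₀ (by positivity)]
        linarith
      have := hupd (-β) (by linarith) (by have := abs_nonneg (α / (2 * α - 1)); linarith) e
      rwa [neg_smul, sub_neg_eq_add] at this
    · exact hid

def runWord (α β : ℝ) (Epst Eneg : Finset (Sym2 (Fin n))) (w : List (Sym2 (Fin n)))
    (x : Fin n → ℝ) : Fin n → ℝ :=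
  w.foldl (fun y e => Wsel α β Epst Eneg (some e) *ᵥ y) x

lemma runWord_append (w₁ w₂ : List (Sym2 (Fin n))) (x : Fin n → ℝ) :
    runWord α β Epst Eneg (w₁ ++ w₂) x = runWord α β Epst Eneg w₂ (runWord α β Epst Eneg w₁ x) :=
  List.foldl_append

lemma xproc_add_length (x0 : Fin n → ℝ) (ω : ℕ → Sel n) (N : ℕ) (w : List (Sym2 (Fin n)))
    (hω : ∀ t < w.length, ω (N + t) = w[t]?) :
    xproc α β Epst Eneg x0 ω (N + w.length)
      = runWord α β Epst Eneg w (xproc α β Epst Eneg x0 ω N) := by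
  induction w generalizing N with
  | nil => rfl
  | cons e w ih =>
    have he : ω N = some e := by simpa using hω 0 (by simp)
    rw [List.length_cons, add_comm w.length, ← add_assoc, ih (N + 1) fun t ht => by
      simpa [add_assoc, add_comm 1 t] using hω (t + 1) (by simpa using ht)]
    simp [runWord, xproc, he]

lemma xproc_dependsOn (x0 : Fin n → ℝ) (N : ℕ) :
    DependsOn (fun ω => xproc α β Epst Eneg x0 ω N) (Set.Iio N) := by
  induction N with
  | zero => exact fun _ _ _ => rfl
  | succ N ih =>
    intro ω ω' h
    simp only [xproc]
    rw [h N (Set.mem_Iio.2 (Nat.lt_succ_self N)),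
      show xproc α β Epst Eneg x0 ω N = xproc α β Epst Eneg x0 ω' N from
        ih fun k hk => h k (Set.mem_Iio.2 (Nat.lt_succ_of_lt hk))]

end Dynamics

lemma _root_.SimpleGraph.Walk.sub_le_length_mul_s12 {V : Type*} {G : SimpleGraph V} (x : V → ℝ) {c : ℝ}
    (hc : ∀ a b, G.Adj a b → x a - x b ≤ c) {u v : V} (p : G.Walk u v) :
    x u - x v ≤ p.length * c := by
  induction p with
  | nil => simp
  | cons hadj q ih =>
    rw [SimpleGraph.Walk.length_cons, Nat.cast_succ]
    linarith [hc _ _ hadj]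

section Words

variable {n : ℕ} {α β : ℝ} {Epst Eneg : Finset (Sym2 (Fin n))}

lemma graphOf_adj {E : Finset (Sym2 (Fin n))} {a b : Fin n} :
    (graphOf E).Adj a b ↔ s(a, b) ∈ E ∧ a ≠ b := by
  simp [graphOf]

lemma exists_adj_diam_le [NeZero n] {G : SimpleGraph (Fin n)} (hG : G.Connected) {i j : Fin n}
    (hij : G.Adj i j) (x : Fin n → ℝ) : ∃ a b, G.Adj a b ∧ diam x ≤ n * |x a - x b| := by
  by_contra! h
  have hn : (0 : ℝ) < n := Nat.cast_pos.2 (Nat.pos_of_neZero n)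
  have hdiam : 0 < diam x := (by positivity : (0 : ℝ) ≤ n * |x i - x j|).trans_lt (h i j hij)
  obtain ⟨u, v, huv⟩ := exists_diam_eq_sub x
  let p := (hG u v).some.toPath
  have hlen : (p.1.length : ℝ) ≤ n - 1 := by
    have := p.2.length_lt
    rw [Fintype.card_fin] at this
    rw [le_sub_iff_add_le]
    exact_mod_cast this
  have hwalk := p.1.sub_le_length_mul_s12 x (c := diam x / n) fun a b hab =>
    (le_abs_self _).trans ((lt_div_iff₀' hn).2 (h a b hab)).le
  rw [← huv] at hwalk
  have hshort : (n - 1 : ℝ) * (diam x / n) = diam x - diam x / n := by field_simp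
  nlinarith [mul_le_mul_of_nonneg_right hlen (by positivity : 0 ≤ diam x / n),
    (by positivity : 0 < diam x / n)]

lemma exists_Wsel_mulVec_eq (hα : 0 < α) (hαβ : α ≤ β) {a b : Fin n}
    (hab : s(a, b) ∈ Epst ∪ Eneg) :
    ∃ θ, α ≤ |θ| ∧
      ∀ x, Wsel α β Epst Eneg (some s(a, b)) *ᵥ x = x - (θ * (x a - x b)) • esub a b := by
  by_cases hpos : s(a, b) ∈ Epst
  · exact ⟨α, (abs_of_pos hα).ge, fun x => by
      simp only [Wsel, hpos, if_true, Wpos, one_sub_smul_dmat_mulVec]⟩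
  · have hneg : s(a, b) ∈ Eneg := (Finset.mem_union.1 hab).resolve_left hpos
    refine ⟨-β, by rw [abs_neg, abs_of_pos (hα.trans_le hαβ)]; exact hαβ, fun x => ?_⟩
    simp only [Wsel, hpos, hneg, if_false, if_true, Wneg, ← one_sub_smul_dmat_mulVec,
      neg_smul, sub_neg_eq_add]

lemma exists_word_gap_step (hα : 0 < α) (hαβ : α ≤ β) {a b c : Fin n}
    (hab : (graphOf (Epst ∪ Eneg)).Adj a b) (hca : c ≠ a) (hcb : c ≠ b) {x : Fin n → ℝ} {g : ℝ}
    (hg : g ≤ |x a - x b|) :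
    ∃ w : List (Sym2 (Fin n)), w.length ≤ 1 ∧ (∀ e ∈ w, e ∈ Epst ∪ Eneg) ∧
      α / 2 * g ≤ |runWord α β Epst Eneg w x b - runWord α β Epst Eneg w x c| := by
  by_cases hgap : α / 2 * g ≤ |x b - x c|
  · exact ⟨[], by simp, by simp, hgap⟩
  obtain ⟨hE, hne⟩ := graphOf_adj.1 hab
  obtain ⟨θ, hθ, hW⟩ := exists_Wsel_mulVec_eq hα hαβ hE
  refine ⟨[s(a, b)], by simp, by simpa using hE, ?_⟩
  have hy : runWord α β Epst Eneg [s(a, b)] x b - runWord α β Epst Eneg [s(a, b)] x c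
      = (x b - x c) + θ * (x a - x b) := by
    simp only [runWord, List.foldl_cons, hW, List.foldl_nil, Pi.sub_apply, Pi.smul_apply, esub,
      hne.symm, ↓reduceIte, zero_sub, smul_eq_mul, mul_neg, mul_one, sub_neg_eq_add, hca, hcb,
      sub_self, mul_zero, sub_zero]
    ring
  have hθg : α * g ≤ |θ * (x a - x b)| := by
    rw [abs_mul]
    exact (mul_le_mul_of_nonneg_left hg hα.le).trans
      (mul_le_mul_of_nonneg_right hθ (abs_nonneg _))
  have htri : |θ * (x a - x b)| ≤ |x b - x c + θ * (x a - x b)| + |x b - x c| := by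
    simpa using abs_sub (x b - x c + θ * (x a - x b)) (x b - x c)
  rw [hy]
  linarith

/-- Along each edge of the walk the gap is either already present or is created by one update
(`exists_word_gap_step`); an edge leading back to `a` costs nothing. -/
lemma exists_word_gap_walk (hα0 : 0 < α) (hα1 : α < 1) (hαβ : α ≤ β) {i j : Fin n}
    (hij : i ≠ j) {b : Fin n} (p : (graphOf (Epst ∪ Eneg)).Walk b i) {a : Fin n}
    (hab : (graphOf (Epst ∪ Eneg)).Adj a b) (x : Fin n → ℝ) {g : ℝ} (hg0 : 0 ≤ g)
    (hg : g ≤ |x a - x b|) :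
    ∃ w : List (Sym2 (Fin n)), w.length ≤ p.length + 1 ∧ (∀ e ∈ w, e ∈ Epst ∪ Eneg) ∧
      (α / 2) ^ (p.length + 1) * g
        ≤ |runWord α β Epst Eneg w x i - runWord α β Epst Eneg w x j| := by
  have hα2 : α / 2 ≤ 1 := by linarith
  induction p generalizing a x g with
  | nil =>
    rw [SimpleGraph.Walk.length_nil, zero_add, pow_one]
    rcases eq_or_ne j a with rfl | hja
    · refine ⟨[], by simp, by simp, ?_⟩
      rw [abs_sub_comm]
      exact (mul_le_of_le_one_left hg0 hα2).trans hg
    · obtain ⟨w, hw, hwE, hgap⟩ := exists_word_gap_step hα0 hαβ hab hja hij.symm hg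
      exact ⟨w, by simpa using hw, hwE, hgap⟩
  | @cons b c _ hbc q ih =>
    rw [SimpleGraph.Walk.length_cons]
    rcases eq_or_ne c a with rfl | hca
    · obtain ⟨w, hw, hwE, hgap⟩ := ih hij hbc x hg0 (by rwa [abs_sub_comm])
      refine ⟨w, by omega, hwE, ?_⟩
      calc (α / 2) ^ (q.length + 1 + 1) * g = α / 2 * ((α / 2) ^ (q.length + 1) * g) := by ring
        _ ≤ (α / 2) ^ (q.length + 1) * g :=
          mul_le_of_le_one_left (mul_nonneg (pow_nonneg (by linarith) _) hg0) hα2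
        _ ≤ _ := hgap
    · obtain ⟨w₁, hw₁, hwE₁, hgap₁⟩ := exists_word_gap_step hα0 hαβ hab hca hbc.ne' hg
      obtain ⟨w₂, hw₂, hwE₂, hgap₂⟩ := ih hij hbc (runWord α β Epst Eneg w₁ x)
        (mul_nonneg (by linarith) hg0) hgap₁
      refine ⟨w₁ ++ w₂, by simp; omega, fun e he => ?_, ?_⟩
      · rcases List.mem_append.1 he with he | he
        exacts [hwE₁ e he, hwE₂ e he]
      · rw [runWord_append]
        calc (α / 2) ^ (q.length + 1 + 1) * g = (α / 2) ^ (q.length + 1) * (α / 2 * g) := by ring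
          _ ≤ _ := hgap₂

lemma runWord_replicate_sub {i j : Fin n} (hij : i ≠ j) (hneg : s(i, j) ∈ Eneg)
    (hpos : s(i, j) ∉ Epst) (m : ℕ) (x : Fin n → ℝ) :
    runWord α β Epst Eneg (List.replicate m s(i, j)) x i
      - runWord α β Epst Eneg (List.replicate m s(i, j)) x j = (1 + 2 * β) ^ m * (x i - x j) := by
  induction m generalizing x with
  | zero => simp [runWord]
  | succ m ih =>
    rw [List.replicate_succ, runWord, List.foldl_cons, ← runWord, ih]
    simp only [Wsel, hpos, hneg, if_false, if_true, Wneg, add_mulVec, one_mulVec, smul_mulVec,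
      dmat_mulVec]
    simp only [Pi.add_apply, Pi.smul_apply, esub, ↓reduceIte, hij, sub_zero, smul_eq_mul, mul_one,
      hij.symm, zero_sub, mul_neg, neg_sub]
    ring

lemma exists_word_diam_growth [NeZero n] (hconn : (graphOf (Epst ∪ Eneg)).Connected)
    (hα0 : 0 < α) (hα1 : α < 1) (hαβ : α ≤ β) {i j : Fin n} (hij : i ≠ j)
    (hneg : s(i, j) ∈ Eneg) (hpos : s(i, j) ∉ Epst) (x : Fin n → ℝ) :
    ∃ w : List (Sym2 (Fin n)), w.length = n + 1 ∧ (∀ e ∈ w, e ∈ Epst ∪ Eneg) ∧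
      (1 + 2 * β) * ((α / 2) ^ n / n) * diam x ≤ diam (runWord α β Epst Eneg w x) := by
  have hn : (0 : ℝ) < n := Nat.cast_pos.2 (Nat.pos_of_neZero n)
  have hijE : s(i, j) ∈ Epst ∪ Eneg := Finset.mem_union_right _ hneg
  obtain ⟨a, b, hab, hgap⟩ := exists_adj_diam_le hconn (graphOf_adj.2 ⟨hijE, hij⟩) x
  let p := (hconn b i).some.toPath
  have hlen : p.1.length + 1 ≤ n := by
    have := p.2.length_lt
    rwa [Fintype.card_fin] at this
  obtain ⟨w₁, hw₁, hwE₁, hgap₁⟩ := exists_word_gap_walk hα0 hα1 hαβ hij p.1 hab x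
    (g := diam x / n) (div_nonneg (diam_nonneg x) hn.le) ((div_le_iff₀' hn).2 hgap)
  set m := n + 1 - w₁.length with hm
  set y := runWord α β Epst Eneg w₁ x
  refine ⟨w₁ ++ List.replicate m s(i, j), by simp [m]; omega, fun e he => ?_, ?_⟩
  · rcases List.mem_append.1 he with he | he
    exacts [hwE₁ e he, List.eq_of_mem_replicate he ▸ hijE]
  · have hβ : 1 ≤ 1 + 2 * β := by linarith
    rw [runWord_append]
    calc (1 + 2 * β) * ((α / 2) ^ n / n) * diam x
        = (1 + 2 * β) * ((α / 2) ^ n * (diam x / n)) := by ring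
      _ ≤ (1 + 2 * β) ^ m * ((α / 2) ^ (p.1.length + 1) * (diam x / n)) := by
          refine mul_le_mul (le_self_pow₀ hβ (by omega)) (mul_le_mul_of_nonneg_right
            (pow_le_pow_of_le_one (by linarith) (by linarith) hlen) ?_) ?_ (by positivity)
          · exact div_nonneg (diam_nonneg x) hn.le
          · exact mul_nonneg (pow_nonneg (by linarith) _) (div_nonneg (diam_nonneg x) hn.le)
      _ ≤ (1 + 2 * β) ^ m * |y i - y j| := by gcongr
      _ = |runWord α β Epst Eneg (List.replicate m s(i, j)) y i
            - runWord α β Epst Eneg (List.replicate m s(i, j)) y j| := by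
          rw [runWord_replicate_sub hij hneg hpos, abs_mul,
            abs_of_pos (pow_pos (by linarith) m : (0 : ℝ) < (1 + 2 * β) ^ m)]
      _ ≤ _ := abs_sub_le_diam _ i j

end Words

section Growth

lemma le_pow_mul_of_le_mul {d : ℕ → ℝ} {K : ℝ} (hK : 0 ≤ K) (h : ∀ k, d k ≤ K * d (k + 1))
    (k t : ℕ) : d k ≤ K ^ t * d (k + t) := by
  induction t with
  | zero => simp
  | succ t ih =>
    calc d k ≤ K ^ t * d (k + t) := ih
      _ ≤ K ^ t * (K * d (k + t + 1)) := mul_le_mul_of_nonneg_left (h _) (pow_nonneg hK t)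
      _ = K ^ (t + 1) * d (k + (t + 1)) := by ring_nf

lemma mul_pow_card_le_pow_mul {D : ℕ → ℝ} {R C : ℝ} {good : ℕ → Prop} [DecidablePred good]
    (hR : 0 ≤ R) (hC : 0 ≤ C) (hstep : ∀ s, D s ≤ R * D (s + 1))
    (hgood : ∀ s, good s → C * D s ≤ R * D (s + 1)) (M : ℕ) :
    D 0 * C ^ #{s ∈ range M | good s} ≤ R ^ M * D M := by
  induction M with
  | zero => simp
  | succ M ih =>
    rw [range_add_one, filter_insert]
    split_ifs with hM
    · rw [card_insert_of_notMem (by simp), pow_succ, pow_succ]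
      calc D 0 * (C ^ #{s ∈ range M | good s} * C)
          = C * (D 0 * C ^ #{s ∈ range M | good s}) := by ring
        _ ≤ C * (R ^ M * D M) := mul_le_mul_of_nonneg_left ih hC
        _ = R ^ M * (C * D M) := by ring
        _ ≤ R ^ M * (R * D (M + 1)) := mul_le_mul_of_nonneg_left (hgood M hM) (pow_nonneg hR M)
        _ = R ^ M * R * D (M + 1) := by ring
    · calc D 0 * C ^ #{s ∈ range M | good s} ≤ R ^ M * D M := ih
        _ ≤ R ^ M * (R * D (M + 1)) := mul_le_mul_of_nonneg_left (hstep M) (pow_nonneg hR M)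
        _ = R ^ (M + 1) * D (M + 1) := by ring

/-- With `g > M / 2` growth indices below `M`, `D M ≥ D 0 * C ^ g / R ^ M ≥ D 0 * (C / R ^ 2) ^ g
≥ D 0 * 2 ^ g`. -/
lemma tendsto_atTop_of_frequent_growth {D : ℕ → ℝ} {R C : ℝ} {good : ℕ → Prop}
    [DecidablePred good] (hD0 : 0 < D 0) (hR : 1 ≤ R) (hC : 2 * R ^ 2 ≤ C)
    (hstep : ∀ s, D s ≤ R * D (s + 1)) (hgood : ∀ s, good s → C * D s ≤ R * D (s + 1))
    (hfreq : ∀ᶠ M in atTop, M < 2 * #{s ∈ range M | good s}) : Tendsto D atTop atTop := by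
  have hR0 : 0 < R := one_pos.trans_le hR
  have key : ∀ᶠ M in atTop, D 0 * 2 ^ (M / 2) ≤ D M := hfreq.mono fun M hM => by
    set g := #{s ∈ range M | good s}
    have hgrowth := mul_pow_card_le_pow_mul hR0.le ((by positivity : (0 : ℝ) ≤ 2 * R ^ 2).trans hC)
      hstep hgood M
    have hRM : R ^ M ≤ (R ^ 2) ^ g := by rw [← pow_mul]; exact pow_le_pow_right₀ hR (by omega)
    have hCg : 2 ^ g * (R ^ 2) ^ g ≤ C ^ g := by
      rw [← mul_pow]; exact pow_le_pow_left₀ (by positivity) hC g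
    have h2 : (2 : ℝ) ^ (M / 2) ≤ 2 ^ g := pow_le_pow_right₀ one_le_two (by omega)
    have hC0 : 0 < C := by nlinarith
    have hDM : 0 ≤ D M :=
      (pos_of_mul_pos_right ((mul_pos hD0 (pow_pos hC0 g)).trans_le hgrowth) (by positivity)).le
    refine le_of_mul_le_mul_right ?_ (by positivity : (0 : ℝ) < (R ^ 2) ^ g)
    calc D 0 * 2 ^ (M / 2) * (R ^ 2) ^ g ≤ D 0 * (2 ^ g * (R ^ 2) ^ g) := by
          rw [mul_assoc]; gcongr
      _ ≤ D 0 * C ^ g := by gcongr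
      _ ≤ R ^ M * D M := hgrowth
      _ ≤ (R ^ 2) ^ g * D M := by gcongr
      _ = D M * (R ^ 2) ^ g := mul_comm _ _
  refine tendsto_atTop_mono' _ key ?_
  exact ((tendsto_pow_atTop_atTop_of_one_lt one_lt_two).comp
    (Nat.tendsto_div_const_atTop two_ne_zero)).const_mul_atTop hD0

lemma mul_le_pow_mul_of_growth_between {d : ℕ → ℝ} {K C : ℝ} (hK : 0 ≤ K) (hC : 0 ≤ C)
    (hstep : ∀ k, d k ≤ K * d (k + 1)) {a b c e : ℕ} (hab : a ≤ b) (hce : c ≤ e)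
    (hgrow : C * d b ≤ d c) : C * d a ≤ K ^ (b - a + (e - c)) * d e := by
  have hchain := le_pow_mul_of_le_mul hK hstep
  calc C * d a ≤ C * (K ^ (b - a) * d b) := by
        gcongr; simpa [Nat.add_sub_cancel' hab] using hchain a (b - a)
    _ = K ^ (b - a) * (C * d b) := by ring
    _ ≤ K ^ (b - a) * d c := by gcongr
    _ ≤ K ^ (b - a) * (K ^ (e - c) * d e) := by
        gcongr; simpa [Nat.add_sub_cancel' hce] using hchain c (e - c)
    _ = K ^ (b - a + (e - c)) * d e := by ring

lemma tendsto_atTop_of_blockwise_growth {d : ℕ → ℝ} {K C : ℝ} {L J : ℕ} {good S : ℕ → Prop}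
    [DecidablePred S] (hd0 : 0 < d 0) (hK : 1 ≤ K) (hJL : 0 < J * L)
    (hC : 2 * (K ^ (J * L)) ^ 2 ≤ C) (hstep : ∀ k, d k ≤ K * d (k + 1))
    (hgood : ∀ m, good m → C * d (m * L) ≤ d ((m + 1) * L))
    (hS : ∀ s, S s → ∃ m, s * J ≤ m ∧ m < s * J + J ∧ good m)
    (hfreq : ∀ᶠ M in atTop, M < 2 * #{s ∈ range M | S s}) :
    Tendsto d atTop atTop := by
  set A := J * L
  have hK0 : 0 ≤ K := zero_le_one.trans hK
  have hchain := le_pow_mul_of_le_mul hK0 hstep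
  have hC0 : 0 ≤ C := (by positivity : (0 : ℝ) ≤ 2 * (K ^ A) ^ 2).trans hC
  have hdpos : ∀ k, 0 < d k := fun k =>
    pos_of_mul_pos_right (hd0.trans_le (by simpa using hchain 0 k)) (pow_nonneg hK0 k)
  have hD : Tendsto (fun s => d (s * A)) atTop atTop := by
    refine tendsto_atTop_of_frequent_growth (by simpa using hd0) (one_le_pow₀ hK) hC
      (fun s => by simpa [add_mul] using hchain (s * A) A) (good := S) (fun s hs => ?_) hfreq
    obtain ⟨m, hm₁, hm₂, hm⟩ := hS s hs
    have hsm : s * A ≤ m * L := by rw [← mul_assoc]; exact Nat.mul_le_mul_right L hm₁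
    have hms : (m + 1) * L ≤ (s + 1) * A := by
      rw [show (s + 1) * A = (s * J + J) * L by ring]; exact Nat.mul_le_mul_right L hm₂
    have := hdpos ((s + 1) * A)
    refine (mul_le_pow_mul_of_growth_between hK0 hC0 hstep hsm hms (hgood m hm)).trans ?_
    gcongr
    have : (s + 1) * A = s * A + A := by ring
    have : (m + 1) * L = m * L + L := by ring
    omega
  refine tendsto_atTop_mono (fun k => ?_) ((hD.comp (Nat.tendsto_div_const_atTop
    (Nat.pos_iff_ne_zero.1 hJL))).atTop_div_const (pow_pos (zero_lt_one.trans_le hK) A))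
  rw [Function.comp_apply, div_le_iff₀ (pow_pos (zero_lt_one.trans_le hK) A)]
  calc d (k / A * A) ≤ K ^ (k % A) * d (k / A * A + k % A) := hchain _ _
    _ = K ^ (k % A) * d k := by rw [Nat.div_add_mod']
    _ ≤ K ^ A * d k := by
        have := hdpos k
        gcongr
        exact (Nat.mod_lt k hJL).le
    _ = d k * K ^ A := mul_comm _ _

end Growth

open scoped Classical in
/-- Some `⌈M / 2⌉` of the first `M` events must occur together, so a union bound gives at most
`2 ^ M * 16⁻¹ ^ ⌈M / 2⌉ ≤ 2⁻¹ ^ M`. -/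
lemma measure_two_mul_card_notMem_le {Ω : Type*} [MeasurableSpace Ω] {ℙ : Measure Ω}
    {A : ℕ → Set Ω} {r : ℝ≥0∞} (hr : r ≤ 16⁻¹)
    (hA : ∀ I : Finset ℕ, ℙ (⋂ s ∈ I, A s) ≤ r ^ #I) (M : ℕ) :
    ℙ {ω | 2 * #{s ∈ range M | ω ∉ A s} ≤ M} ≤ 2⁻¹ ^ M := by
  set k := M - M / 2
  have hsub : {ω | 2 * #{s ∈ range M | ω ∉ A s} ≤ M}
      ⊆ ⋃ I ∈ powersetCard k (range M), ⋂ s ∈ I, A s := fun ω hω => by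
    have hcard := card_filter_add_card_filter_not (s := range M) (fun s => ω ∈ A s)
    rw [card_range] at hcard
    obtain ⟨I, hI, hIk⟩ := exists_subset_card_eq (s := {s ∈ range M | ω ∈ A s}) (n := k)
      (by simp only [Set.mem_ofPred_eq] at hω; omega)
    refine Set.mem_biUnion (mem_powersetCard.2 ⟨hI.trans (filter_subset _ _), hIk⟩) ?_
    exact Set.mem_biInter fun s hs => (mem_filter.1 (hI hs)).2
  have h16 : (16⁻¹ : ℝ≥0∞) = 2⁻¹ ^ 4 := by rw [← ENNReal.inv_pow]; norm_num
  calc ℙ {ω | 2 * #{s ∈ range M | ω ∉ A s} ≤ M}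
      ≤ ∑ I ∈ powersetCard k (range M), ℙ (⋂ s ∈ I, A s) :=
        (measure_mono hsub).trans (measure_biUnion_finset_le _ _)
    _ ≤ ∑ I ∈ powersetCard k (range M), r ^ k :=
        sum_le_sum fun I hI => (mem_powersetCard.1 hI).2 ▸ hA I
    _ = M.choose k * r ^ k := by rw [sum_const, card_powersetCard, card_range, nsmul_eq_mul]
    _ ≤ 2 ^ M * 2⁻¹ ^ (M + M) := by
        refine mul_le_mul' (by exact_mod_cast Nat.choose_le_two_pow M k) ?_
        calc r ^ k ≤ (2⁻¹ ^ 4) ^ k := by rw [← h16]; gcongr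
          _ ≤ 2⁻¹ ^ (M + M) := by
            rw [← pow_mul]
            exact pow_le_pow_right_of_le_one' (by norm_num) (by omega)
    _ = 2⁻¹ ^ M := by
        rw [pow_add, ← mul_assoc, ← mul_pow, ENNReal.mul_inv_cancel (by norm_num) (by norm_num),
          one_pow, one_mul]

open scoped Classical in
lemma ae_eventually_lt_two_mul_card_notMem {Ω : Type*} [MeasurableSpace Ω] {ℙ : Measure Ω}
    {A : ℕ → Set Ω} {r : ℝ≥0∞} (hr : r ≤ 16⁻¹)
    (hA : ∀ I : Finset ℕ, ℙ (⋂ s ∈ I, A s) ≤ r ^ #I) :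
    ∀ᵐ ω ∂ℙ, ∀ᶠ M in atTop, M < 2 * #{s ∈ range M | ω ∉ A s} := by
  have hgeom : ∑' M : ℕ, (2⁻¹ : ℝ≥0∞) ^ M = 2 := by
    rw [ENNReal.tsum_geometric, ENNReal.one_sub_inv_two, inv_inv]
  have hsum : ∑' M, ℙ {ω | 2 * #{s ∈ range M | ω ∉ A s} ≤ M} ≠ ∞ :=
    ne_top_of_le_ne_top (by rw [hgeom]; exact ENNReal.ofNat_ne_top)
      (ENNReal.tsum_le_tsum (measure_two_mul_card_notMem_le hr hA))
  filter_upwards [ae_eventually_notMem hsum] with ω hω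
  exact hω.mono fun M hM => not_le.1 hM

section CylinderProduct

variable {σ : Type*}

lemma dependsOn_mem_inter {S T : Set (ℕ → σ)} {s : Set ℕ} (hS : DependsOn (· ∈ S) s)
    (hT : DependsOn (· ∈ T) s) : DependsOn (· ∈ S ∩ T) s := fun _ _ h =>
  congrArg₂ And (hS h) (hT h)

lemma dependsOn_mem_biInter {F : ℕ → Set (ℕ → σ)} {s : Set ℕ} (I : Finset ℕ)
    (hF : ∀ m ∈ I, DependsOn (· ∈ F m) s) : DependsOn (· ∈ ⋂ m ∈ I, F m) s := fun _ _ h => by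
  simp only [Set.mem_iInter]
  exact propext <| forall₂_congr fun m hm => (hF m hm h).to_iff

lemma dependsOn_mem_hits {N L : ℕ} {u : (ℕ → σ) → ℕ → σ} (hu : DependsOn u (Set.Iio N)) :
    DependsOn (· ∈ {ω | ∀ t < L, ω (N + t) = u ω t}) (Set.Iio (N + L)) := fun ω ω' h => by
  have hu' : u ω = u ω' := hu fun k hk => h k (Set.mem_Iio.2 (Nat.lt_add_right L hk))
  simp only [Set.mem_ofPred_eq, hu']
  exact propext <| forall₂_congr fun t ht => by rw [h (N + t) (Set.mem_Iio.2 (by omega))]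

variable [MeasurableSpace σ]

def IsCylinderProduct (ℙ : Measure (ℕ → σ)) (μ : σ → ℝ≥0∞) : Prop :=
  ∀ (K : Finset ℕ) (v : ℕ → σ), ℙ {ω | ∀ k ∈ K, ω k = v k} = ∏ k ∈ K, μ (v k)

lemma measurableSet_of_dependsOn [Finite σ] [MeasurableSingletonClass σ] {N : ℕ}
    {S : Set (ℕ → σ)} (hS : DependsOn (· ∈ S) (Set.Iio N)) : MeasurableSet S := by
  let π : (ℕ → σ) → Fin N → σ := fun ω k => ω k
  have hSπ : S = π ⁻¹' (π '' S) := by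
    refine (Set.subset_preimage_image π S).antisymm fun ω ⟨ω', hω', hπ⟩ => ?_
    have : ω' ∈ S ↔ ω ∈ S :=
      (hS fun k hk => congrFun hπ ⟨k, Set.mem_Iio.1 hk⟩).to_iff
    exact this.1 hω'
  rw [hSπ]
  exact (measurable_pi_lambda _ fun k => measurable_pi_apply _) (Set.toFinite _).measurableSet

variable {ℙ : Measure (ℕ → σ)} {μ : σ → ℝ≥0∞}

lemma IsCylinderProduct.measure_prefix_inter (hℙ : IsCylinderProduct ℙ μ) (N L : ℕ)
    (ω₀ u : ℕ → σ) :
    ℙ {ω : ℕ → σ | (∀ k < N, ω k = ω₀ k) ∧ ∀ t < L, ω (N + t) = u t}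
      = ℙ {ω : ℕ → σ | ∀ k < N, ω k = ω₀ k} * ∏ t ∈ range L, μ (u t) := by
  let v k := if k < N then ω₀ k else u (k - N)
  have h₁ : {ω : ℕ → σ | (∀ k < N, ω k = ω₀ k) ∧ ∀ t < L, ω (N + t) = u t}
      = {ω | ∀ k ∈ range (N + L), ω k = v k} := by
    ext ω
    simp only [Set.mem_ofPred_eq, mem_range, v]
    refine ⟨fun ⟨h₁, h₂⟩ k hk => ?_, fun h => ⟨fun k hk => ?_, fun t ht => ?_⟩⟩
    · split_ifs with hkN
      · exact h₁ k hkN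
      · simpa [Nat.add_sub_cancel' (not_lt.1 hkN)] using h₂ (k - N) (by omega)
    · simpa [hk] using h k (by omega)
    · simpa using h (N + t) (by omega)
  have h₂ : {ω : ℕ → σ | ∀ k < N, ω k = ω₀ k} = {ω | ∀ k ∈ range N, ω k = v k} := by
    ext ω
    simp only [Set.mem_ofPred_eq, mem_range, v]
    exact forall₂_congr fun k hk => by rw [if_pos hk]
  rw [h₁, h₂, hℙ, hℙ, prod_range_add]
  simp [v]

lemma IsCylinderProduct.mul_measure_le_measure_inter [Finite σ] [MeasurableSingletonClass σ]
    (hℙ : IsCylinderProduct ℙ μ) {N L : ℕ} {S : Set (ℕ → σ)} (hS : DependsOn (· ∈ S) (Set.Iio N))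
    {u : (ℕ → σ) → ℕ → σ} (hu : DependsOn u (Set.Iio N)) {p : ℝ≥0∞}
    (hp : ∀ ω, p ≤ ∏ t ∈ range L, μ (u ω t)) :
    p * ℙ S ≤ ℙ (S ∩ {ω | ∀ t < L, ω (N + t) = u ω t}) := by
  have := Fintype.ofFinite σ
  let π : (ℕ → σ) → Fin N → σ := fun ω k => ω k
  have hπ : Measurable π := measurable_pi_lambda _ fun k => measurable_pi_apply _
  have hfibres : ∀ A, ℙ A = ∑ v, ℙ (π ⁻¹' {v} ∩ A) := fun A => by
    simp_rw [← Measure.restrict_apply (hπ (measurableSet_singleton _))]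
    rw [sum_measure_preimage_singleton _ fun v _ => hπ (measurableSet_singleton v), coe_univ,
      Set.preimage_univ, Measure.restrict_apply_univ]
  rw [hfibres S, hfibres, mul_sum]
  refine sum_le_sum fun v _ => ?_
  by_cases hv : ∃ ω₀, ω₀ ∈ π ⁻¹' {v} ∩ S
  · obtain ⟨ω₀, hω₀, hS₀⟩ := hv
    have hagree : ∀ ω, ω ∈ π ⁻¹' {v} ↔ ∀ k < N, ω k = ω₀ k := fun ω => by
      rw [Set.mem_preimage, Set.mem_singleton_iff, ← Set.mem_singleton_iff.1 hω₀, funext_iff]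
      exact ⟨fun h k hk => h ⟨k, hk⟩, fun h k => h k k.2⟩
    have hcyl : π ⁻¹' {v} ∩ S = {ω | ∀ k < N, ω k = ω₀ k} := by
      ext ω
      refine ⟨fun h => (hagree ω).1 h.1, fun h => ⟨(hagree ω).2 h, ?_⟩⟩
      exact (hS fun k hk => (h k hk).symm).to_iff.1 hS₀
    have hcyl' : π ⁻¹' {v} ∩ (S ∩ {ω | ∀ t < L, ω (N + t) = u ω t})
        = {ω | (∀ k < N, ω k = ω₀ k) ∧ ∀ t < L, ω (N + t) = u ω₀ t} := by
      rw [← Set.inter_assoc, hcyl]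
      ext ω
      simp only [Set.mem_inter_iff, Set.mem_ofPred_eq]
      exact and_congr_right fun h => by rw [hu fun k hk => h k hk]
    rw [hcyl, hcyl', hℙ.measure_prefix_inter, mul_comm p]
    exact mul_le_mul_right (hp ω₀) _
  · push Not at hv
    rw [Set.eq_empty_of_forall_notMem hv]
    simp

lemma IsCylinderProduct.measure_inter_miss_le [Finite σ] [MeasurableSingletonClass σ]
    [IsFiniteMeasure ℙ] (hℙ : IsCylinderProduct ℙ μ) {N L : ℕ} {S : Set (ℕ → σ)}
    (hS : DependsOn (· ∈ S) (Set.Iio N)) {u : (ℕ → σ) → ℕ → σ} (hu : DependsOn u (Set.Iio N))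
    {p : ℝ≥0∞} (hp : ∀ ω, p ≤ ∏ t ∈ range L, μ (u ω t)) :
    ℙ (S ∩ {ω | ¬ ∀ t < L, ω (N + t) = u ω t}) ≤ (1 - p) * ℙ S := by
  set T := {ω : ℕ → σ | ∀ t < L, ω (N + t) = u ω t}
  have hT : MeasurableSet T := measurableSet_of_dependsOn (dependsOn_mem_hits hu)
  have hsplit : ℙ (S ∩ Tᶜ) = ℙ S - ℙ (S ∩ T) :=
    ENNReal.eq_sub_of_add_eq (measure_ne_top ℙ _) (by
      rw [add_comm, ← Set.sdiff_eq, measure_inter_add_sdiff S hT])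
  calc ℙ (S ∩ Tᶜ) = ℙ S - ℙ (S ∩ T) := hsplit
    _ ≤ ℙ S - p * ℙ S := tsub_le_tsub_left (hℙ.mul_measure_le_measure_inter hS hu hp) _
    _ = (1 - p) * ℙ S := by rw [ENNReal.sub_mul fun _ _ => measure_ne_top ℙ S, one_mul]

lemma measure_inter_biInter_le_pow {F : ℕ → Set (ℕ → σ)} {L : ℕ} {q : ℝ≥0∞}
    (hF : ∀ m, DependsOn (· ∈ F m) (Set.Iio ((m + 1) * L)))
    (hq : ∀ m (S : Set (ℕ → σ)), DependsOn (· ∈ S) (Set.Iio (m * L)) → ℙ (S ∩ F m) ≤ q * ℙ S)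
    {N : ℕ} {S : Set (ℕ → σ)} (hS : DependsOn (· ∈ S) (Set.Iio (N * L))) (I : Finset ℕ)
    (hI : ∀ m ∈ I, N ≤ m) : ℙ (S ∩ ⋂ m ∈ I, F m) ≤ q ^ #I * ℙ S := by
  induction I using Finset.induction_on_max with
  | empty => simp
  | insert a I ha ih =>
    have hdep : DependsOn (· ∈ S ∩ ⋂ m ∈ I, F m) (Set.Iio (a * L)) :=
      dependsOn_mem_inter (hS.mono (Set.Iio_subset_Iio (Nat.mul_le_mul_right L
        (hI a (mem_insert_self a I))))) (dependsOn_mem_biInter I fun m hm =>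
          (hF m).mono (Set.Iio_subset_Iio (Nat.mul_le_mul_right L (ha m hm))))
    rw [set_biInter_insert, Set.inter_left_comm, Set.inter_comm, card_insert_of_notMem
      fun h => (ha a h).false, pow_succ', mul_assoc]
    exact (hq a _ hdep).trans (mul_le_mul_right (ih fun m hm => hI m (mem_insert_of_mem hm)) q)

end CylinderProduct

namespace IsCylinderProduct

variable {σ : Type*} [MeasurableSpace σ] [Finite σ] [MeasurableSingletonClass σ]
  {ℙ : Measure (ℕ → σ)} [IsProbabilityMeasure ℙ] {μ : σ → ℝ≥0∞}

open scoped Classical in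
/-- Given the past, block `m` misses its target `u m ω` with probability at most `1 - p`, so
superblock `s` misses all its `J` targets with probability at most `(1 - p) ^ J ≤ 16⁻¹`. -/
theorem ae_eventually_frequent_hits (hℙ : IsCylinderProduct ℙ μ) {L J : ℕ}
    {u : ℕ → (ℕ → σ) → ℕ → σ} (hu : ∀ m, DependsOn (u m) (Set.Iio (m * L))) {p : ℝ≥0∞}
    (hp : ∀ m ω, p ≤ ∏ t ∈ range L, μ (u m ω t)) (hJ : (1 - p) ^ J ≤ 16⁻¹) :
    ∀ᵐ ω ∂ℙ, ∀ᶠ M in atTop, M < 2 * #{s ∈ range M |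
      ∃ m, s * J ≤ m ∧ m < s * J + J ∧ ∀ t < L, ω (m * L + t) = u m ω t} := by
  set F : ℕ → Set (ℕ → σ) := fun m => {ω | ¬ ∀ t < L, ω (m * L + t) = u m ω t}
  have hF : ∀ m, DependsOn (· ∈ F m) (Set.Iio ((m + 1) * L)) := fun m _ _ h => by
    rw [add_mul, one_mul] at h
    exact congrArg Not (dependsOn_mem_hits (hu m) h)
  have hq : ∀ m (S : Set (ℕ → σ)), DependsOn (· ∈ S) (Set.Iio (m * L)) →
      ℙ (S ∩ F m) ≤ (1 - p) * ℙ S := fun m _ hS => hℙ.measure_inter_miss_le hS (hu m) (hp m)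
  set SF : ℕ → Set (ℕ → σ) := fun s => ⋂ m ∈ Ico (s * J) (s * J + J), F m
  have hSF : ∀ s, DependsOn (· ∈ SF s) (Set.Iio ((s + 1) * (J * L))) := fun s =>
    dependsOn_mem_biInter _ fun m hm => (hF m).mono <| Set.Iio_subset_Iio <| by
      rw [show (s + 1) * (J * L) = (s * J + J) * L by ring]
      exact Nat.mul_le_mul_right L (mem_Ico.1 hm).2
  have hqSF : ∀ s (S : Set (ℕ → σ)), DependsOn (· ∈ S) (Set.Iio (s * (J * L))) →
      ℙ (S ∩ SF s) ≤ (1 - p) ^ J * ℙ S := fun s S hS => by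
    have := measure_inter_biInter_le_pow hF hq (N := s * J) (by rwa [mul_assoc])
      (Ico (s * J) (s * J + J))
      fun m hm => (mem_Ico.1 hm).1
    rwa [Nat.card_Ico, add_tsub_cancel_left] at this
  have hA : ∀ I : Finset ℕ, ℙ (⋂ s ∈ I, SF s) ≤ ((1 - p) ^ J) ^ #I := fun I => by
    simpa using measure_inter_biInter_le_pow hSF hqSF (N := 0) (S := Set.univ)
      (fun _ _ _ => rfl) I fun _ _ => Nat.zero_le _
  filter_upwards [ae_eventually_lt_two_mul_card_notMem hJ hA] with ω hω
  refine hω.mono fun M hM => hM.trans_eq <| congrArg _ <| congrArg _ <| filter_congr fun s _ => ?_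
  simp [SF, F]

end IsCylinderProduct

section Model

variable {n : ℕ} {α β : ℝ} {Epst Eneg : Finset (Sym2 (Fin n))}

instance : MeasurableSingletonClass (Sel n) := ⟨fun _ => MeasurableSpace.measurableSet_top⟩

lemma exists_pos_forall_le_seldist [NeZero n] {P : Matrix (Fin n) (Fin n) ℝ}
    {E : Finset (Sym2 (Fin n))} (hpw : ∀ i j, s(i, j) ∈ E → 0 < P i j + P j i) :
    ∃ p : ℝ≥0∞, 0 < p ∧ ∀ e ∈ E, p ≤ seldist P E (some e) := by
  refine ⟨E.inf fun e => seldist P E (some e),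
    (Finset.lt_inf_iff ENNReal.zero_lt_top).2 fun e he => ?_, fun e he => inf_le he⟩
  induction e using Sym2.ind with
  | _ i j =>
    simp only [seldist, he, if_true, edgeWeight, Sym2.lift_mk, ENNReal.ofReal_pos]
    exact div_pos (hpw i j he) (Nat.cast_pos.2 (Nat.pos_of_neZero n))

lemma pow_length_le_prod_seldist {P : Matrix (Fin n) (Fin n) ℝ} {E : Finset (Sym2 (Fin n))}
    {p : ℝ≥0∞} (hp : ∀ e ∈ E, p ≤ seldist P E (some e)) {w : List (Sym2 (Fin n))}
    (hw : ∀ e ∈ w, e ∈ E) : p ^ w.length ≤ ∏ t ∈ range w.length, seldist P E w[t]? :=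
  calc p ^ w.length = ∏ _t ∈ range w.length, p := by rw [prod_const, card_range]
    _ ≤ _ := prod_le_prod' fun t ht => by
      rw [List.getElem?_eq_getElem (mem_range.1 ht)]
      exact hp _ (hw _ (List.getElem_mem _))

lemma exists_pos_one_sub_pow_le {p : ℝ≥0∞} (hp : 0 < p) : ∃ J, 0 < J ∧ (1 - p) ^ J ≤ 16⁻¹ :=
  (((ENNReal.tendsto_pow_atTop_nhds_zero_of_lt_one (ENNReal.sub_lt_self ENNReal.one_ne_top
    one_ne_zero hp.ne')).eventually (gt_mem_nhds (by norm_num))).and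
      (eventually_gt_atTop 0)).exists.imp fun _ h => ⟨h.2, h.1.le⟩

theorem ae_tendsto_diam_xproc {P : Matrix (Fin n) (Fin n) ℝ} {ℙ : Measure (ℕ → Sel n)}
    [IsProbabilityMeasure ℙ] (hiid : IsIIDSel ℙ P (Epst ∪ Eneg)) {p : ℝ≥0∞}
    (hp : ∀ e ∈ Epst ∪ Eneg, p ≤ seldist P (Epst ∪ Eneg) (some e)) {L J : ℕ} (hJL : 0 < J * L)
    (hJ : (1 - p ^ L) ^ J ≤ 16⁻¹) {K C : ℝ} (hK : 1 ≤ K) (hC : 2 * (K ^ (J * L)) ^ 2 ≤ C)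
    (hstep : ∀ s x, diam x ≤ K * diam (Wsel α β Epst Eneg s *ᵥ x))
    (hword : ∀ x, ∃ w : List (Sym2 (Fin n)), w.length = L ∧ (∀ e ∈ w, e ∈ Epst ∪ Eneg) ∧
      C * diam x ≤ diam (runWord α β Epst Eneg w x))
    {x0 : Fin n → ℝ} (hx0 : 0 < diam x0) :
    ∀ᵐ ω ∂ℙ, Tendsto (fun k => diam (xproc α β Epst Eneg x0 ω k)) atTop atTop := by
  classical
  choose w hwlen hwE hw using hword
  have hℙ : IsCylinderProduct ℙ (seldist P (Epst ∪ Eneg)) := hiid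
  have hae := hℙ.ae_eventually_frequent_hits (L := L)
    (u := fun m ω t => (w (xproc α β Epst Eneg x0 ω (m * L)))[t]?)
    (fun m ω ω' h => by
      have : xproc α β Epst Eneg x0 ω (m * L) = xproc α β Epst Eneg x0 ω' (m * L) :=
        xproc_dependsOn x0 _ h
      simp only [this])
    (fun m ω => by
      simpa only [hwlen] using pow_length_le_prod_seldist hp (hwE (xproc α β Epst Eneg x0 ω
        (m * L)))) hJ
  refine hae.mono fun ω hω => tendsto_atTop_of_blockwise_growth hx0 hK hJL hC
    (fun k => hstep _ _) (fun m hm => ?_) (fun s hs => hs) hω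
  have hblock := xproc_add_length (α := α) (β := β) (Epst := Epst) (Eneg := Eneg) x0 ω _ _
    (by rwa [hwlen])
  rw [hwlen] at hblock
  rw [add_one_mul, hblock]
  exact hw _

end Model

theorem almost_sure_divergence_large_beta_general
    (n : ℕ) (hn : 3 ≤ n)
    (Epst Eneg : Finset (Sym2 (Fin n)))
    (hdisj : Disjoint Epst Eneg)
    (hloop : ∀ e ∈ Epst ∪ Eneg, ¬ e.IsDiag)
    (P : Matrix (Fin n) (Fin n) ℝ)
    (hconn : (graphOf (Epst ∪ Eneg)).Connected)
    (hneg : Eneg.Nonempty)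
    (hpw : ∀ i j : Fin n, s(i, j) ∈ Epst ∪ Eneg → 0 < P i j + P j i)
    (α : ℝ) (hα0 : 0 < α) (hα1 : α < 1) (hαhalf : α ≠ 1 / 2)
    (ℙ : Measure (ℕ → Sel n)) [IsProbabilityMeasure ℙ]
    (hiid : IsIIDSel ℙ P (Epst ∪ Eneg)) :
    ∃ βsharp : ℝ, 0 < βsharp ∧ ∀ β : ℝ, βsharp < β →
      ∀ x0 : Fin n → ℝ, 0 < diam x0 →
        ℙ {ω | Tendsto (fun k : ℕ => diam (xproc α β Epst Eneg x0 ω k)) atTop atTop} = 1 := by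
  have : NeZero n := ⟨by omega⟩
  obtain ⟨⟨i, j⟩, he⟩ := hneg
  have hij : i ≠ j := fun h => hloop _ (mem_union_right _ he) (Sym2.mk_isDiag_iff.2 h)
  have hpos : s(i, j) ∉ Epst := fun h => disjoint_left.1 hdisj h he
  obtain ⟨p, hp0, hp⟩ := exists_pos_forall_le_seldist hpw
  obtain ⟨J, hJ0, hJ⟩ := exists_pos_one_sub_pow_le (ENNReal.pow_pos hp0 (n + 1))
  set K := 2 + 2 * |α / (2 * α - 1)|
  have hK : 1 ≤ K := by have := abs_nonneg (α / (2 * α - 1)); linarith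
  set c := (α / 2) ^ n / n
  have hc : 0 < c := by positivity
  refine ⟨max 1 (2 * (K ^ (J * (n + 1))) ^ 2 / c), by positivity, fun β hβ x0 hx0 => ?_⟩
  have hβ1 : 1 < β := (le_max_left _ _).trans_lt hβ
  have hC : 2 * (K ^ (J * (n + 1))) ^ 2 ≤ (1 + 2 * β) * c := by
    have := (div_lt_iff₀ hc).1 ((le_max_right _ _).trans_lt hβ)
    nlinarith
  refine (measure_congr (ae_eq_univ.2 ?_)).trans measure_univ
  exact ae_tendsto_diam_xproc hiid hp (Nat.mul_pos hJ0 n.succ_pos) hJ hK hC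
    (diam_le_mul_diam_Wsel (by contrapose! hαhalf; linarith) (by linarith))
    (exists_word_diam_growth hconn hα0 hα1 (by linarith) hij he hpos) hx0

theorem almost_sure_divergence_large_beta
    (n : ℕ) (hn : 3 ≤ n)
    (Epst Eneg : Finset (Sym2 (Fin n)))
    (hdisj : Disjoint Epst Eneg)
    (hloop : ∀ e ∈ Epst ∪ Eneg, ¬ e.IsDiag)
    (P : Matrix (Fin n) (Fin n) ℝ)
    (hP : RowStochastic P)
    (hPc : Complies P (Epst ∪ Eneg))
    (hconn : (graphOf (Epst ∪ Eneg)).Connected)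
    (hneg : Eneg.Nonempty)
    (hpw : ∀ i j : Fin n, s(i, j) ∈ Epst ∪ Eneg → 0 < P i j + P j i)
    (α : ℝ) (hα0 : 0 < α) (hα1 : α < 1) (hαhalf : α ≠ 1 / 2)
    (ℙ : Measure (ℕ → Sel n)) [IsProbabilityMeasure ℙ]
    (hiid : IsIIDSel ℙ P (Epst ∪ Eneg)) :
    ∃ βsharp : ℝ, 0 < βsharp ∧ ∀ β : ℝ, βsharp < β →
      ∀ x0 : Fin n → ℝ, 0 < diam x0 →
        ℙ {ω | Tendsto (fun k : ℕ => diam (xproc α β Epst Eneg x0 ω k)) atTop atTop} = 1 :=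
  almost_sure_divergence_large_beta_general n hn Epst Eneg hdisj hloop P hconn hneg hpw α hα0 hα1
    hαhalf ℙ hiid

end SignedOpinion
end
end

section
/- (Robustness via finite-time agreement) Assume p_ij + p_ji > 0 for every {i,j} ∈ E. Suppose there exist an integer T ≥ 1 and a finite sequence of node pairs {i_s, j_s} ∈ E_pst, s = 1, …, T, such that W⁺_{i_T j_T}·W⁺_{i_{T−1} j_{T−1}}·…·W⁺_{i_1 j_1} = U. Then for every β ≥ 0, ℙ(lim_{k→∞} W(k)W(k−1)⋯W(0) = U) = 1, irrespective of the number and positions of negative links; in particular, for every deterministic initial x⁰ ∈ ℝⁿ, max_{i,j} |x_i(k) − x_j(k)| → 0 almost surely. -/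
open Matrix MeasureTheory Filter
open scoped ENNReal

noncomputable section

namespace SignedOpinion

/-! Every update matrix fixes `𝟙` and is symmetric, so `W U = U W = U`: once the product
`W(k) ⋯ W(0)` contains the agreement word as a block of consecutive factors, it equals `U` forever,
whatever the signs of the other selected links. Under the i.i.d. selection the `m`-th window of
length `T` spells the word independently with the same positive probability, so by the second
Borel–Cantelli lemma almost every selection sequence contains the word. -/

theorem _root_.List.prod_mul_eq_self_of_forall {M : Type*} [Monoid M] {z : M} {l : List M}
    (h : ∀ x ∈ l, x * z = z) : l.prod * z = z := by
  induction l with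
  | nil => exact one_mul z
  | cons x l ih =>
    rw [List.prod_cons, mul_assoc, ih fun y hy => h y (List.mem_cons_of_mem x hy),
      h x List.mem_cons_self]

theorem _root_.List.mul_prod_eq_self_of_forall {M : Type*} [Monoid M] {z : M} {l : List M}
    (h : ∀ x ∈ l, z * x = z) : z * l.prod = z := by
  induction l with
  | nil => exact mul_one z
  | cons x l ih =>
    rw [List.prod_cons, ← mul_assoc, h x List.mem_cons_self,
      ih fun y hy => h y (List.mem_cons_of_mem x hy)]

theorem measure_setOf_eq_one_of_ae {Ω : Type*} [MeasurableSpace Ω] {μ : Measure Ω}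
    [IsProbabilityMeasure μ] {p : Ω → Prop} (h : ∀ᵐ ω ∂μ, p ω) : μ {ω | p ω} = 1 :=
  (measure_congr (ae_eq_univ.2 h)).trans measure_univ

theorem ae_frequently_mem_of_iIndepSet {Ω : Type*} [MeasurableSpace Ω] {μ : Measure Ω}
    [IsProbabilityMeasure μ] {s : ℕ → Set Ω} (hsm : ∀ m, MeasurableSet (s m))
    (hs : ProbabilityTheory.iIndepSet s μ) (hsum : ∑' m, μ (s m) = ∞) :
    ∀ᵐ ω ∂μ, ∃ᶠ m in atTop, ω ∈ s m := by
  have hlimsup := ProbabilityTheory.measure_limsup_eq_one hsm hs hsum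
  rw [← prob_compl_eq_zero_iff (MeasurableSet.measurableSet_limsup hsm)] at hlimsup
  exact ae_iff.2 (measure_mono_null
    (Set.compl_subset_compl.2 fun ω hω => mem_limsup_iff_frequently_mem.1 hω) hlimsup)

theorem pairwise_disjoint_windows {T : ℕ} :
    Pairwise fun a b => Disjoint ((Finset.range T).map (addLeftEmbedding (a * T)))
      ((Finset.range T).map (addLeftEmbedding (b * T))) := by
  have hdiv : ∀ m s, s < T → (m * T + s) / T = m := fun m s hs => by
    rw [add_comm, Nat.add_mul_div_right _ _ (by omega), Nat.div_eq_of_lt hs, zero_add]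
  refine fun a b hab => Finset.disjoint_left.2 fun k hka hkb => hab ?_
  simp only [Finset.mem_map, Finset.mem_range, addLeftEmbedding_apply] at hka hkb
  obtain ⟨s, hs, rfl⟩ := hka
  obtain ⟨s', hs', hk⟩ := hkb
  rw [← hdiv a s hs, ← hk, hdiv b s' hs']

section Cylinders

variable {A : Type*} [MeasurableSpace A] [MeasurableSingletonClass A] {μ : Measure (ℕ → A)}
  {q : A → ℝ≥0∞}

theorem measurableSet_cylinder (K : Finset ℕ) (v : ℕ → A) :
    MeasurableSet {ω : ℕ → A | ∀ k ∈ K, ω k = v k} :=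
  MeasurableSet.pi K.countable_toSet fun k _ => measurableSet_singleton (v k)

theorem iIndepSet_cylinder
    (hμ : ∀ (K : Finset ℕ) (v : ℕ → A), μ {ω | ∀ k ∈ K, ω k = v k} = ∏ k ∈ K, q (v k))
    {K : ℕ → Finset ℕ} (hK : Pairwise fun a b => Disjoint (K a) (K b)) (v : ℕ → A) :
    ProbabilityTheory.iIndepSet (fun m => {ω | ∀ k ∈ K m, ω k = v k}) μ := by
  refine (ProbabilityTheory.iIndepSet_iff_meas_biInter
    fun m => measurableSet_cylinder (K m) v).2 fun S => ?_
  have hinter : (⋂ m ∈ S, {ω : ℕ → A | ∀ k ∈ K m, ω k = v k}) =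
      {ω | ∀ k ∈ S.biUnion K, ω k = v k} := by
    ext ω
    simp only [Set.mem_iInter, Set.mem_ofPred_eq, Finset.mem_biUnion, forall_exists_index, and_imp]
    exact ⟨fun h k m hm hk => h m hm k hk, fun h m hm k hk => h k m hm hk⟩
  rw [hinter, hμ, Finset.prod_biUnion (hK.set_pairwise _)]
  exact Finset.prod_congr rfl fun m _ => (hμ (K m) v).symm

theorem ae_frequently_window_eq
    (hμ : ∀ (K : Finset ℕ) (v : ℕ → A), μ {ω | ∀ k ∈ K, ω k = v k} = ∏ k ∈ K, q (v k))
    [IsProbabilityMeasure μ] {T : ℕ} (hT : 0 < T) (w : Fin T → A) (hw : ∀ s, q (w s) ≠ 0) :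
    ∀ᵐ ω ∂μ, ∃ᶠ m in atTop, ∀ s : Fin T, ω (m * T + s) = w s := by
  set v : ℕ → A := fun k => w ⟨k % T, Nat.mod_lt k hT⟩
  set K : ℕ → Finset ℕ := fun m => (Finset.range T).map (addLeftEmbedding (m * T))
  have hv : ∀ m s (hs : s < T), v (m * T + s) = w ⟨s, hs⟩ := fun m s hs =>
    congrArg w (Fin.ext (by simp [Nat.mul_add_mod_self_right, Nat.mod_eq_of_lt hs]))
  have hwindow : ∀ m,
      {ω : ℕ → A | ∀ k ∈ K m, ω k = v k} ⊆ {ω | ∀ s : Fin T, ω (m * T + s) = w s} :=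
    fun m ω hω s => (hω _ (Finset.mem_map_of_mem _ (Finset.mem_range.2 s.2))).trans (hv m s s.2)
  have hprob : ∀ m, μ {ω | ∀ k ∈ K m, ω k = v k} = ∏ s, q (w s) := fun m => by
    simp only [K, hμ, Finset.prod_map, addLeftEmbedding_apply]
    rw [Finset.prod_range fun s => q (v (m * T + s))]
    exact Finset.prod_congr rfl fun s _ => by rw [hv m s s.2]
  have hsum : ∑' m, μ {ω | ∀ k ∈ K m, ω k = v k} = ∞ := by
    simpa only [hprob] using
      ENNReal.tsum_const_eq_top_of_ne_zero (Finset.prod_ne_zero_iff.2 fun s _ => hw s)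
  exact (ae_frequently_mem_of_iIndepSet (fun m => measurableSet_cylinder (K m) v)
    (iIndepSet_cylinder hμ pairwise_disjoint_windows v) hsum).mono fun _ hω =>
      hω.mono fun m hm => hwindow m hm

end Cylinders

variable {n : ℕ}

theorem sum_esub (i j : Fin n) : ∑ k, esub i j k = 0 := by
  simp [esub, Finset.sum_sub_distrib]

theorem dmat_mul_Umat (e : Sym2 (Fin n)) : dmat e * Umat n = 0 := by
  induction e using Sym2.ind with
  | _ i j =>
    ext a b
    simp [dmat, dmatAux, Umat, Matrix.mul_apply, Matrix.vecMulVec_apply, mul_assoc,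
      ← Finset.mul_sum, ← Finset.sum_mul, sum_esub]

theorem Umat_mul_dmat (e : Sym2 (Fin n)) : Umat n * dmat e = 0 := by
  induction e using Sym2.ind with
  | _ i j =>
    ext a b
    simp [dmat, dmatAux, Umat, Matrix.mul_apply, Matrix.vecMulVec_apply, ← mul_assoc,
      ← Finset.mul_sum, ← Finset.sum_mul, sum_esub]

theorem seldist_some_ne_zero {P : Matrix (Fin n) (Fin n) ℝ} {E : Finset (Sym2 (Fin n))}
    (hpw : ∀ i j : Fin n, s(i, j) ∈ E → 0 < P i j + P j i) {e : Sym2 (Fin n)} (he : e ∈ E) :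
    seldist P E (some e) ≠ 0 := by
  induction e using Sym2.ind with
  | _ i j =>
    have hw : 0 < edgeWeight P s(i, j) := div_pos (hpw i j he) (Nat.cast_pos.2 i.pos)
    simpa [seldist, he] using hw

theorem diam_Umat_mulVec (x : Fin n → ℝ) : diam (Umat n *ᵥ x) = 0 := by
  have hconst : Umat n *ᵥ x = fun _ => (n : ℝ)⁻¹ * ∑ j, x j := by
    ext
    simp [Umat, Matrix.mulVec, dotProduct, Finset.mul_sum]
  rw [hconst]
  cases isEmpty_or_nonempty (Fin n) <;> simp [diam]

variable (α β : ℝ) (Epst Eneg : Finset (Sym2 (Fin n)))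

theorem Wsel_mul_Umat (a : Sel n) : Wsel α β Epst Eneg a * Umat n = Umat n := by
  rcases a with _ | e
  · exact one_mul _
  · simp only [Wsel]
    split_ifs <;> simp [Wpos, Wneg, sub_mul, add_mul, dmat_mul_Umat]

theorem Umat_mul_Wsel (a : Sel n) : Umat n * Wsel α β Epst Eneg a = Umat n := by
  rcases a with _ | e
  · exact mul_one _
  · simp only [Wsel]
    split_ifs <;> simp [Wpos, Wneg, mul_sub, mul_add, Umat_mul_dmat]

theorem Wprod_eq_prod_range (ω : ℕ → Sel n) (k : ℕ) :
    Wprod α β Epst Eneg ω k =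
      ((List.range (k + 1)).map fun j => Wsel α β Epst Eneg (ω j)).reverse.prod := by
  induction k with
  | zero => simp [Wprod]
  | succ k ih => rw [Wprod, ih, List.range_succ (n := k + 1)]; simp

theorem xproc_succ (x0 : Fin n → ℝ) (ω : ℕ → Sel n) (k : ℕ) :
    xproc α β Epst Eneg x0 ω (k + 1) = Wprod α β Epst Eneg ω k *ᵥ x0 := by
  induction k with
  | zero => rfl
  | succ k ih => rw [xproc, ih, Matrix.mulVec_mulVec]; rfl

variable {α β Epst Eneg}

/-- The window spells the word backwards in time, so that
`W(mT+T-1) ⋯ W(mT) = W⁺_{e 0} ⋯ W⁺_{e (T-1)}`. -/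
theorem Wprod_eq_Umat_of_window {T m k : ℕ} {ω : ℕ → Sel n} (e : Fin T → Sym2 (Fin n))
    (he : ∀ s, e s ∈ Epst) (hU : (List.ofFn fun s => Wpos α (e s)).prod = Umat n)
    (hω : ∀ s : Fin T, ω (m * T + s) = some (e s.rev)) (hk : m * T + T ≤ k + 1) :
    Wprod α β Epst Eneg ω k = Umat n := by
  have hblock :
      (((List.range T).map (m * T + ·)).map fun j => Wsel α β Epst Eneg (ω j)).reverse.prod =
        Umat n := by
    rw [List.map_map, ← List.map_coe_finRange_eq_range, List.map_map, ← List.map_reverse,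
      List.finRange_reverse, List.map_map, ← List.ofFn_eq_map, ← hU]
    congr 1
    refine List.ofFn_inj.2 (funext fun s => ?_)
    simp only [Function.comp_apply]
    rw [hω, Fin.rev_rev]
    exact if_pos (he s)
  obtain ⟨j, hj⟩ := Nat.exists_eq_add_of_le hk
  rw [Wprod_eq_prod_range, hj, List.range_add, List.range_add]
  simp only [List.map_append, List.reverse_append, List.prod_append]
  rw [hblock, List.mul_prod_eq_self_of_forall (by simp [Umat_mul_Wsel]),
    List.prod_mul_eq_self_of_forall (by simp [Wsel_mul_Umat])]

theorem robustness_finite_time_agreement_general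
    (n : ℕ)
    (Epst Eneg : Finset (Sym2 (Fin n)))
    (P : Matrix (Fin n) (Fin n) ℝ)
    (hpw : ∀ i j : Fin n, s(i, j) ∈ Epst ∪ Eneg → 0 < P i j + P j i)
    (α : ℝ)
    (ℙ : Measure (ℕ → Sel n)) [IsProbabilityMeasure ℙ]
    (hiid : IsIIDSel ℙ P (Epst ∪ Eneg))
    (hfin : ∃ T : ℕ, 1 ≤ T ∧ ∃ seq : Fin T → Fin n × Fin n,
      (∀ s : Fin T, s((seq s).1, (seq s).2) ∈ Epst) ∧
      (List.ofFn (fun s : Fin T => Wpos α s((seq s).1, (seq s).2))).prod = Umat n) :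
    ∀ β : ℝ, 0 ≤ β →
      ℙ {ω | Tendsto (fun k : ℕ => Wprod α β Epst Eneg ω k) atTop (nhds (Umat n))} = 1 ∧
      ∀ x0 : Fin n → ℝ,
        ℙ {ω | Tendsto (fun k : ℕ => diam (xproc α β Epst Eneg x0 ω k)) atTop (nhds 0)} = 1 := by
  intro β _
  obtain ⟨T, hT, seq, hseq, hprod⟩ := hfin
  have hwindow : ∀ᵐ ω ∂ℙ, ∃ m, ∀ s : Fin T,
      ω (m * T + s) = some s((seq s.rev).1, (seq s.rev).2) :=
    (ae_frequently_window_eq hiid hT _ fun s =>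
      seldist_some_ne_zero hpw (Finset.mem_union_left _ (hseq _))).mono fun _ h => h.exists
  have hagree : ∀ᵐ ω ∂ℙ, ∀ᶠ k in atTop, Wprod α β Epst Eneg ω k = Umat n :=
    hwindow.mono fun ω ⟨m, hm⟩ => eventually_atTop.2 ⟨m * T + T, fun k hk =>
      Wprod_eq_Umat_of_window (fun s => s((seq s).1, (seq s).2)) hseq hprod hm (by omega)⟩
  refine ⟨measure_setOf_eq_one_of_ae (hagree.mono fun ω h =>
    tendsto_const_nhds.congr' (h.mono fun _ => Eq.symm)), fun x0 => ?_⟩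
  refine measure_setOf_eq_one_of_ae (hagree.mono fun ω h => ?_)
  refine (tendsto_add_atTop_iff_nat 1).1 (tendsto_const_nhds.congr' (h.mono fun k hk => ?_))
  show 0 = diam _
  rw [xproc_succ, hk, diam_Umat_mulVec]

theorem robustness_finite_time_agreement
    (n : ℕ) (hn : 3 ≤ n)
    (Epst Eneg : Finset (Sym2 (Fin n)))
    (hdisj : Disjoint Epst Eneg)
    (hloop : ∀ e ∈ Epst ∪ Eneg, ¬ e.IsDiag)
    (P : Matrix (Fin n) (Fin n) ℝ)
    (hP : RowStochastic P)
    (hPc : Complies P (Epst ∪ Eneg))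
    (hpw : ∀ i j : Fin n, s(i, j) ∈ Epst ∪ Eneg → 0 < P i j + P j i)
    (α : ℝ) (hα0 : 0 ≤ α) (hα1 : α ≤ 1)
    (ℙ : Measure (ℕ → Sel n)) [IsProbabilityMeasure ℙ]
    (hiid : IsIIDSel ℙ P (Epst ∪ Eneg))
    (hfin : ∃ T : ℕ, 1 ≤ T ∧ ∃ seq : Fin T → Fin n × Fin n,
      (∀ s : Fin T, s((seq s).1, (seq s).2) ∈ Epst) ∧
      (List.ofFn (fun s : Fin T => Wpos α s((seq s).1, (seq s).2))).prod = Umat n) :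
    ∀ β : ℝ, 0 ≤ β →
      ℙ {ω | Tendsto (fun k : ℕ => Wprod α β Epst Eneg ω k) atTop (nhds (Umat n))} = 1 ∧
      ∀ x0 : Fin n → ℝ,
        ℙ {ω | Tendsto (fun k : ℕ => diam (xproc α β Epst Eneg x0 ω k)) atTop (nhds 0)} = 1 :=
  robustness_finite_time_agreement_general n Epst Eneg P hpw α ℙ hiid hfin

end SignedOpinion
end
end

section
/- (Hypercube gives finite-time agreement) Define the m-dimensional hypercube H^m as the graph on vertex set {0,1}^m in which two vertices are adjacent if and only if they differ in exactly one coordinate. Suppose α = 1/2, n = 2^m for some integer m ≥ 1, and the positive graph (V, E_pst) contains a spanning subgraph isomorphic to H^m, i.e., there is a bijection φ : {0,1}^m → V such that whenever u, v ∈ {0,1}^m differ in exactly one coordinate, {φ(u), φ(v)} ∈ E_pst. Then there exists a sequence of T := (n·log₂ n)/2 = m·2^{m−1} node pairs {i_s, j_s} ∈ E_pst, s = 1, …, T, such that W⁺_{i_T j_T}·W⁺_{i_{T−1} j_{T−1}}·…·W⁺_{i_1 j_1} = U. -/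
open Matrix MeasureTheory Filter
open scoped ENNReal

noncomputable section

namespace SignedOpinion

/-!
With `α = 1/2`, `W⁺` on an edge `{u, v}` replaces `x u` and `x v` by their average. The
`2 ^ (m - 1)` edges of the hypercube in direction `d` are pairwise disjoint, so their edge
Laplacians `L_e` multiply to zero and the updates along them compose to `1 - ½ ∑ L_e`. Every
vertex lies on exactly one such edge, whence `∑ L_e = 1 - P_d` for the permutation matrix `P_d`
of flipping coordinate `d`: the composite is `½ (1 + P_d)`, which averages each vertex with its
`d`-neighbour. After the directions `d ∈ S` have been processed, every vertex carries the average
over the `2 ^ #S` vertices agreeing with it outside `S`; for `S = univ` this is `U`.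
-/

theorem prod_map_one_sub_of_pairwise_mul_eq_zero {R ι : Type*} [Ring R] {l : List ι}
    (f : ι → R) (h : l.Pairwise fun i j => f i * f j = 0) :
    (l.map fun i => 1 - f i).prod = 1 - (l.map f).sum := by
  induction l with
  | nil => simp
  | cons i t ih =>
    rw [List.pairwise_cons] at h
    have hzero : f i * (t.map f).sum = 0 := by
      rw [← List.sum_map_mul_left]
      exact List.sum_eq_zero fun x hx => by
        obtain ⟨j, hj, rfl⟩ := List.mem_map.mp hx
        exact h.1 j hj
    simp only [List.map_cons, List.prod_cons, List.sum_cons, ih h.2]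
    rw [sub_mul, one_mul, mul_sub, mul_one, hzero]
    abel

theorem sum_single_eq_permMatrix {R I : Type*} [Fintype I] [DecidableEq I]
    [AddCommMonoidWithOne R] (σ : Equiv.Perm I) :
    ∑ i, single i (σ i) (1 : R) = σ.permMatrix R := by
  ext a b
  simp [Matrix.sum_apply, single_apply, PEquiv.toMatrix_apply, ite_and]

section EdgeLaplacian

variable {R I J : Type*} [CommRing R] [DecidableEq I] [DecidableEq J]

def edgeLap (i j : I) : Matrix I I R :=
  vecMulVec (Pi.single i 1 - Pi.single j 1) (Pi.single i 1 - Pi.single j 1)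

theorem dmat_mk_eq_edgeLap {n : ℕ} (i j : Fin n) : dmat s(i, j) = edgeLap i j := by
  ext a b
  simp [dmat, dmatAux, esub, edgeLap, vecMulVec_apply, Pi.single_apply]

theorem edgeLap_eq_single (i j : I) :
    (edgeLap i j : Matrix I I R) = single i i 1 + single j j 1 - (single i j 1 + single j i 1) := by
  ext a b
  simp only [edgeLap, vecMulVec_apply, Pi.sub_apply, Pi.single_apply, Matrix.add_apply,
    Matrix.sub_apply, single_apply]
  split_ifs <;> grind

theorem edgeLap_mul_edgeLap [Fintype I] {i j k l : I} (hik : i ≠ k) (hil : i ≠ l)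
    (hjk : j ≠ k) (hjl : j ≠ l) : (edgeLap i j * edgeLap k l : Matrix I I R) = 0 := by
  simp [edgeLap, vecMulVec_mul_vecMulVec, hik.symm, hil.symm, hjk.symm, hjl.symm]

theorem prod_one_sub_smul_edgeLap [Fintype I] (α : R) {l : List (I × I)}
    (hl : l.Pairwise fun p q => p.1 ≠ q.1 ∧ p.1 ≠ q.2 ∧ p.2 ≠ q.1 ∧ p.2 ≠ q.2) :
    (l.map fun p => 1 - α • edgeLap p.1 p.2).prod
      = 1 - α • (l.map fun p => (edgeLap p.1 p.2 : Matrix I I R)).sum := by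
  rw [prod_map_one_sub_of_pairwise_mul_eq_zero, List.smul_sum, List.map_map]
  · rfl
  · refine hl.imp fun ⟨hik, hil, hjk, hjl⟩ => ?_
    rw [smul_mul_smul_comm, edgeLap_mul_edgeLap hik hil hjk hjl, smul_zero]

theorem reindex_edgeLap (ψ : I ≃ J) (i j : I) :
    reindex ψ ψ (edgeLap i j : Matrix I I R) = edgeLap (ψ i) (ψ j) := by
  ext a b
  simp [edgeLap, vecMulVec_apply, Pi.single_apply, Equiv.symm_apply_eq]

end EdgeLaplacian

section Hypercube

open Finset Function

theorem sum_filter_add_update {ι M : Type*} [Fintype ι] [DecidableEq ι] [AddCommMonoid M]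
    (d : ι) (g : (ι → Bool) → M) :
    ∑ u with u d = false, (g u + g (update u d true)) = ∑ u, g u := by
  rw [sum_add_distrib, ← sum_filter_add_sum_filter_not univ (· d = false)]
  congr 1
  apply sum_nbij' (update · d true) (update · d false) <;> intro u hu <;> simp_all

theorem forall_notMem_eq_iff_insert {ι β : Type*} [DecidableEq ι] {d : ι} {S : Finset ι}
    (hd : d ∉ S) (a b : ι → β) :
    (∀ i ∉ S, a i = b i) ↔ a d = b d ∧ ∀ i ∉ insert d S, a i = b i := by
  constructor
  · intro h
    exact ⟨h d hd, fun i hi => h i fun hiS => hi (mem_insert_of_mem hiS)⟩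
  · rintro ⟨hd', h⟩ i hi
    rcases eq_or_ne i d with rfl | hid
    · exact hd'
    · exact h i (by simp [hid, hi])

variable {m : ℕ}

def flipCoord (d : Fin m) : Equiv.Perm (Fin m → Bool) :=
  Involutive.toPerm (fun u => update u d !(u d)) fun u => by simp

theorem flipCoord_apply (d : Fin m) (u : Fin m → Bool) :
    flipCoord d u = update u d !(u d) := rfl

def dirEdges (d : Fin m) : List ((Fin m → Bool) × (Fin m → Bool)) :=
  (univ.filter (· d = false)).toList.map fun u => (u, update u d true)

theorem mem_dirEdges {d : Fin m} {p : (Fin m → Bool) × (Fin m → Bool)} :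
    p ∈ dirEdges d ↔ p.1 d = false ∧ p.2 = update p.1 d true := by
  rcases p with ⟨u, v⟩
  simp only [dirEdges, List.mem_map, mem_toList, mem_filter, mem_univ, true_and, Prod.mk.injEq]
  constructor
  · rintro ⟨u, hu, rfl, rfl⟩
    exact ⟨hu, rfl⟩
  · rintro ⟨hu, rfl⟩
    exact ⟨u, hu, rfl, rfl⟩

theorem card_filter_eq_false (d : Fin m) : #{u : Fin m → Bool | u d = false} = 2 ^ (m - 1) := by
  have h := sum_filter_add_update d fun _ => 1
  simp only [sum_const, smul_eq_mul, mul_one, card_univ, Fintype.card_fun, Fintype.card_bool,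
    Fintype.card_fin] at h
  have hpow : 2 ^ m = 2 ^ (m - 1) * 2 := by rw [← pow_succ, Nat.sub_add_cancel d.pos]
  omega

theorem length_dirEdges (d : Fin m) : (dirEdges d).length = 2 ^ (m - 1) := by
  simp [dirEdges, card_filter_eq_false]

theorem pairwise_disjoint_dirEdges (d : Fin m) :
    (dirEdges d).Pairwise fun p q =>
      p.1 ≠ q.1 ∧ p.1 ≠ q.2 ∧ p.2 ≠ q.1 ∧ p.2 ≠ q.2 := by
  have hnodup : (dirEdges d).Nodup := (nodup_toList _).map fun _ _ h => congrArg Prod.fst h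
  refine hnodup.pairwise_of_forall_ne fun p hp q hq hpq => ?_
  obtain ⟨hu, hp⟩ := mem_dirEdges.mp hp
  obtain ⟨hw, hq⟩ := mem_dirEdges.mp hq
  have huw : p.1 ≠ q.1 := fun h => hpq (Prod.ext h (by rw [hp, hq, h]))
  refine ⟨huw, fun h => ?_, fun h => ?_, fun h => huw (funext fun i => ?_)⟩
  · simpa [hu, hq] using congrFun h d
  · simpa [hw, hp] using congrFun h d
  · rcases eq_or_ne i d with rfl | hi
    · rw [hu, hw]
    · simpa [hp, hq, hi] using congrFun h i

theorem sum_edgeLap_dirEdges (d : Fin m) :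
    ((dirEdges d).map fun p => (edgeLap p.1 p.2 : Matrix _ _ ℝ)).sum
      = 1 - (flipCoord d).permMatrix ℝ := by
  have hflip : ∀ u : Fin m → Bool, u d = false →
      flipCoord d u = update u d true ∧ flipCoord d (update u d true) = u := by
    intro u hu
    simp [flipCoord_apply, hu]
  rw [dirEdges, List.map_map, sum_map_toList, ← sum_single_one, ← sum_single_eq_permMatrix,
    ← sum_filter_add_update d, ← sum_filter_add_update d, ← sum_sub_distrib]
  refine sum_congr rfl fun u hu => ?_
  obtain ⟨h1, h2⟩ := hflip u (mem_filter.mp hu).2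
  simp only [Function.comp_apply, edgeLap_eq_single, h1, h2]

theorem prod_dirEdges (d : Fin m) :
    ((dirEdges d).map fun p => 1 - (2⁻¹ : ℝ) • edgeLap p.1 p.2).prod
      = (2⁻¹ : ℝ) • (1 + (flipCoord d).permMatrix ℝ) := by
  rw [prod_one_sub_smul_edgeLap _ (pairwise_disjoint_dirEdges d), sum_edgeLap_dirEdges]
  module

def cubeAvg (S : Finset (Fin m)) : Matrix (Fin m → Bool) (Fin m → Bool) ℝ :=
  of fun a b => if ∀ i ∉ S, a i = b i then (2 ^ #S)⁻¹ else 0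

theorem cubeAvg_empty : cubeAvg (∅ : Finset (Fin m)) = 1 := by
  ext a b
  simp [cubeAvg, one_apply, funext_iff]

theorem cubeAvg_univ :
    cubeAvg (univ : Finset (Fin m)) = (2 ^ m : ℝ)⁻¹ • of fun _ _ => 1 := by
  ext a b
  simp [cubeAvg]

theorem avg_flipCoord_mul_cubeAvg {d : Fin m} {S : Finset (Fin m)} (hd : d ∉ S) :
    (2⁻¹ : ℝ) • (1 + (flipCoord d).permMatrix ℝ) * cubeAvg S = cubeAvg (insert d S) := by
  have hflip : ∀ a b : Fin m → Bool,
      (∀ i ∉ insert d S, flipCoord d a i = b i) ↔ ∀ i ∉ insert d S, a i = b i := by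
    refine fun a b => forall₂_congr fun i hi => ?_
    rw [flipCoord_apply, update_of_ne (by rintro rfl; exact hi (mem_insert_self i S))]
  ext a b
  rw [smul_mul, add_mul, one_mul, PEquiv.toMatrix_toPEquiv_mul]
  simp only [cubeAvg, Matrix.smul_apply, Matrix.add_apply, submatrix_apply, id, of_apply,
    forall_notMem_eq_iff_insert hd, hflip, card_insert_of_notMem hd]
  have hd_flip : flipCoord d a d = !a d := by simp [flipCoord_apply]
  rw [hd_flip]
  by_cases hX : ∀ i ∉ insert d S, a i = b i
  · simp only [and_iff_left hX, if_pos hX]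
    cases a d <;> cases b d <;> norm_num [pow_succ]
  · rw [if_neg hX, if_neg fun h => hX h.2, if_neg fun h => hX h.2]
    ring

theorem prod_flatMap_dirEdges {ds : List (Fin m)} (hds : ds.Nodup) :
    ((ds.flatMap dirEdges).map fun p => 1 - (2⁻¹ : ℝ) • edgeLap p.1 p.2).prod
      = cubeAvg ds.toFinset := by
  induction ds with
  | nil => simp [cubeAvg_empty]
  | cons d ds ih =>
    rw [List.nodup_cons] at hds
    rw [List.flatMap_cons, List.map_append, List.prod_append, prod_dirEdges, ih hds.2,
      List.toFinset_cons, avg_flipCoord_mul_cubeAvg (by simpa using hds.1)]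

def cubeEdges (m : ℕ) : List ((Fin m → Bool) × (Fin m → Bool)) :=
  (List.finRange m).flatMap dirEdges

theorem length_cubeEdges : (cubeEdges m).length = m * 2 ^ (m - 1) := by
  simp [cubeEdges, List.length_flatMap, length_dirEdges]

theorem card_ne_of_mem_cubeEdges {p : (Fin m → Bool) × (Fin m → Bool)}
    (hp : p ∈ cubeEdges m) :
    #{i | p.1 i ≠ p.2 i} = 1 := by
  obtain ⟨d, -, hd⟩ := List.mem_flatMap.mp hp
  obtain ⟨hd1, hd2⟩ := mem_dirEdges.mp hd
  rw [card_eq_one]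
  refine ⟨d, eq_singleton_iff_unique_mem.mpr ⟨by simp [hd1, hd2], fun i hi => ?_⟩⟩
  by_contra hid
  simp [hd2, update_of_ne hid] at hi

theorem prod_cubeEdges :
    ((cubeEdges m).map fun p => 1 - (2⁻¹ : ℝ) • edgeLap (R := ℝ) p.1 p.2).prod
      = (2 ^ m : ℝ)⁻¹ • of fun _ _ => 1 := by
  rw [cubeEdges, prod_flatMap_dirEdges (List.nodup_finRange m), List.toFinset_finRange,
    cubeAvg_univ]

end Hypercube

theorem Wpos_mk_eq_reindex {I : Type*} [Fintype I] [DecidableEq I] {n : ℕ} (ψ : I ≃ Fin n)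
    (α : ℝ) (u v : I) :
    Wpos α s(ψ u, ψ v) = reindexAlgEquiv ℝ ℝ ψ (1 - α • edgeLap u v) := by
  rw [Wpos, dmat_mk_eq_edgeLap, map_sub, map_one, map_smul, coe_reindexAlgEquiv, reindex_edgeLap]

theorem exists_ofFn_eq_of_length_eq {α : Type*} (l : List α) {k : ℕ} (h : l.length = k) :
    ∃ f : Fin k → α, List.ofFn f = l := by
  subst h
  exact ⟨l.get, List.ofFn_get l⟩

theorem hypercube_finite_time_agreement_general
    (n m : ℕ) (hn : n = 2 ^ m)
    (Epst : Finset (Sym2 (Fin n)))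
    (α : ℝ) (hα : α = 1 / 2)
    (φ : (Fin m → Bool) → Fin n) (hφ : Function.Bijective φ)
    (hcube : ∀ u v : Fin m → Bool,
      (Finset.univ.filter (fun i : Fin m => u i ≠ v i)).card = 1 → s(φ u, φ v) ∈ Epst) :
    ∃ seq : Fin (m * 2 ^ (m - 1)) → Fin n × Fin n,
      (∀ s : Fin (m * 2 ^ (m - 1)), s((seq s).1, (seq s).2) ∈ Epst) ∧
      (List.ofFn (fun s : Fin (m * 2 ^ (m - 1)) =>
        Wpos α s((seq s).1, (seq s).2))).prod = Umat n := by
  obtain ⟨edges, hedges⟩ := exists_ofFn_eq_of_length_eq (cubeEdges m) length_cubeEdges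
  let ψ := Equiv.ofBijective φ hφ
  refine ⟨fun s => (ψ (edges s).1, ψ (edges s).2), fun s => hcube _ _ ?_, ?_⟩
  · exact card_ne_of_mem_cubeEdges (hedges ▸ List.mem_ofFn.mpr ⟨s, rfl⟩)
  · have hprod : List.ofFn (fun s => Wpos α s(ψ (edges s).1, ψ (edges s).2))
        = ((cubeEdges m).map fun p => 1 - (2⁻¹ : ℝ) • edgeLap p.1 p.2).map
            (reindexAlgEquiv ℝ ℝ ψ) := by
      rw [← hedges, List.map_map, List.map_ofFn]
      refine congrArg List.ofFn (funext fun s => ?_)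
      rw [Wpos_mk_eq_reindex, hα, one_div]
      rfl
    rw [hprod, ← map_list_prod, prod_cubeEdges]
    subst hn
    ext a b
    simp [Umat]

theorem hypercube_finite_time_agreement
    (n m : ℕ) (hm : 1 ≤ m) (hn : n = 2 ^ m)
    (Epst : Finset (Sym2 (Fin n)))
    (α : ℝ) (hα : α = 1 / 2)
    (φ : (Fin m → Bool) → Fin n) (hφ : Function.Bijective φ)
    (hcube : ∀ u v : Fin m → Bool,
      (Finset.univ.filter (fun i : Fin m => u i ≠ v i)).card = 1 → s(φ u, φ v) ∈ Epst) :
    ∃ seq : Fin (m * 2 ^ (m - 1)) → Fin n × Fin n,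
      (∀ s : Fin (m * 2 ^ (m - 1)), s((seq s).1, (seq s).2) ∈ Epst) ∧
      (List.ofFn (fun s : Fin (m * 2 ^ (m - 1)) =>
        Wpos α s((seq s).1, (seq s).2))).prod = Umat n :=
  hypercube_finite_time_agreement_general n m hn Epst α hα φ hφ hcube

end SignedOpinion
end
end

section
/- (Triangle lemma) Let α ∈ (0,1) and β > 0. There exist a real number δ > 0 and an integer Z ≥ 1, depending only on α and β (in particular not on the nodes or on the belief values; one may take δ = 1/16 and Z = max{⌈log_{1+2β} 4⌉, ⌈log_{|1−2α|}(1/4)⌉} when α ≠ 1/2, Z = ⌈log_{1+2β} 4⌉ when α = 1/2), such that for any three distinct nodes i₀, i₁, i₂ ∈ V with {i₀, i₁} ∈ E and any vector x ∈ ℝⁿ: (i) there exists a sequence M_1, …, M_Z of matrices, each equal either to I, or to some W⁺_{uv} with {u,v} ∈ E_pst, or to some W⁻_{uv} with {u,v} ∈ E_neg, such that y := M_Z⋯M_1 x satisfies |y_{i₁} − y_{i₂}| ≥ δ·|x_{i₀} − x_{i₁}|; and (ii) there exists such a sequence with |y_{i₁} − y_{i₂}| ≥ δ·|x_{i₀}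 − x_{i₂}|. -/
open Matrix MeasureTheory Filter
open scoped ENNReal

noncomputable section

namespace SignedOpinion

/-!
The edge `{i₀, i₁}` supplies a step matrix `1 - θ (e_{i₀} - e_{i₁})(e_{i₀} - e_{i₁})ᵀ`, with
`θ = α` (`W⁺`) or `θ = -β` (`W⁻`), which moves `x_{i₁}` by `θ (x_{i₀} - x_{i₁})` and fixes
`x_{i₂}`. Since `|θ| ≥ min α β`, either `x_{i₁} - x_{i₂}` or its updated value is at least a fixed
fraction of `|x_{i₀} - x_{i₁}|`, and likewise of `|x_{i₀} - x_{i₂}|`; so one step (that matrix or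
the identity) suffices, with `δ = min α β / (2 + β)`.
-/

def IsStepMatrix {n : ℕ} (α β : ℝ) (Epst Eneg : Finset (Sym2 (Fin n)))
    (M : Matrix (Fin n) (Fin n) ℝ) : Prop :=
  M = 1 ∨ (∃ e ∈ Epst, M = Wpos α e) ∨ (∃ e ∈ Eneg, M = Wneg β e)

lemma dmat_mulVec_apply {n : ℕ} (i j k : Fin n) (x : Fin n → ℝ) :
    (dmat s(i, j) *ᵥ x) k = esub i j k * (x i - x j) := by
  have hsum : ∑ l, esub i j l * x l = x i - x j := by
    simp [esub, sub_mul, Finset.sum_sub_distrib]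
  simp only [dmat, Sym2.lift_mk, dmatAux, Matrix.mulVec, Matrix.vecMulVec_apply, dotProduct,
    mul_assoc, ← Finset.mul_sum, hsum]

lemma one_sub_smul_dmat_mulVec_apply_right {n : ℕ} (θ : ℝ) {i j : Fin n} (hij : i ≠ j)
    (x : Fin n → ℝ) : ((1 - θ • dmat s(i, j)) *ᵥ x) j = x j + θ * (x i - x j) := by
  simp only [sub_mulVec, one_mulVec, smul_mulVec, Pi.sub_apply, Pi.smul_apply,
    dmat_mulVec_apply, esub, hij.symm, ↓reduceIte, zero_sub, neg_mul, one_mul, neg_sub,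
    smul_eq_mul]
  ring

lemma one_sub_smul_dmat_mulVec_apply_of_ne {n : ℕ} (θ : ℝ) {i j k : Fin n} (hki : k ≠ i)
    (hkj : k ≠ j) (x : Fin n → ℝ) : ((1 - θ • dmat s(i, j)) *ᵥ x) k = x k := by
  simp [Matrix.sub_mulVec, Matrix.smul_mulVec, dmat_mulVec_apply, esub, hki, hkj]

lemma exists_isStepMatrix_one_sub_smul_dmat {n : ℕ} {α β : ℝ}
    {Epst Eneg : Finset (Sym2 (Fin n))} {e : Sym2 (Fin n)} (he : e ∈ Epst ∪ Eneg)
    (hα0 : 0 ≤ α) (hα1 : α ≤ 1) (hβ : 0 ≤ β) :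
    ∃ θ : ℝ, min α β ≤ |θ| ∧ |1 - θ| ≤ 1 + β ∧
      IsStepMatrix α β Epst Eneg (1 - θ • dmat e) := by
  rcases Finset.mem_union.mp he with hpos | hneg
  · refine ⟨α, ?_, ?_, Or.inr (Or.inl ⟨e, hpos, rfl⟩)⟩
    · rw [abs_of_nonneg hα0]
      exact min_le_left α β
    · rw [abs_of_nonneg (by linarith)]
      linarith
  · refine ⟨-β, ?_, ?_, Or.inr (Or.inr ⟨e, hneg, ?_⟩)⟩
    · rw [abs_neg, abs_of_nonneg hβ]
      exact min_le_right α β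
    · rw [sub_neg_eq_add, abs_of_nonneg (by linarith)]
    · rw [Wneg, neg_smul, sub_neg_eq_add]

lemma exists_isStepMatrix_seq_one_of_le_max {n : ℕ} {α β : ℝ}
    {Epst Eneg : Finset (Sym2 (Fin n))} {M : Matrix (Fin n) (Fin n) ℝ}
    (hM : IsStepMatrix α β Epst Eneg M) (x : Fin n → ℝ) (i j : Fin n) {c : ℝ}
    (hc : c ≤ max |x i - x j| |(M *ᵥ x) i - (M *ᵥ x) j|) :
    ∃ Ms : Fin 1 → Matrix (Fin n) (Fin n) ℝ, (∀ s, IsStepMatrix α β Epst Eneg (Ms s)) ∧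
      c ≤ |((List.ofFn Ms).prod *ᵥ x) i - ((List.ofFn Ms).prod *ᵥ x) j| := by
  rcases le_max_iff.mp hc with hc | hc
  · exact ⟨fun _ => 1, fun _ => Or.inl rfl, by simpa using hc⟩
  · exact ⟨fun _ => M, fun _ => hM, by simpa using hc⟩

lemma div_mul_abs_sub_le_max_abs_of_two_le {m θ K : ℝ} (hθ : m ≤ |θ|) (hK : 2 ≤ K)
    (u v w : ℝ) : m / K * |u - v| ≤ max |v - w| |v + θ * (u - v) - w| := by
  have htri : |θ| * |u - v| ≤ |v + θ * (u - v) - w| + |v - w| := by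
    have h := abs_sub (v + θ * (u - v) - w) (v - w)
    rwa [show v + θ * (u - v) - w - (v - w) = θ * (u - v) by ring, abs_mul] at h
  have hmax : |θ| * |u - v| ≤ K * max |v - w| |v + θ * (u - v) - w| := by
    nlinarith [le_max_left |v - w| |v + θ * (u - v) - w|,
      le_max_right |v - w| |v + θ * (u - v) - w|, abs_nonneg (v - w)]
  rw [div_mul_eq_mul_div, div_le_iff₀ (by linarith)]
  nlinarith [mul_le_mul_of_nonneg_right hθ (abs_nonneg (u - v))]

lemma div_mul_abs_sub_le_max_abs_of_one_add_abs_le {m θ K : ℝ} (hθ : m ≤ |θ|)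
    (hK : 1 + |1 - θ| ≤ K) (u v w : ℝ) :
    m / K * |u - w| ≤ max |v - w| |v + θ * (u - v) - w| := by
  have htri : |θ| * |u - w| ≤ |v + θ * (u - v) - w| + |1 - θ| * |v - w| := by
    have h := abs_sub (v + θ * (u - v) - w) ((1 - θ) * (v - w))
    rwa [show v + θ * (u - v) - w - (1 - θ) * (v - w) = θ * (u - w) by ring, abs_mul,
      abs_mul] at h
  have hmax : |θ| * |u - w| ≤ K * max |v - w| |v + θ * (u - v) - w| := by
    nlinarith [le_max_left |v - w| |v + θ * (u - v) - w|,
      le_max_right |v - w| |v + θ * (u - v) - w|, abs_nonneg (v - w), abs_nonneg (1 - θ)]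
  have hK0 : 0 < K := by linarith [abs_nonneg (1 - θ)]
  rw [div_mul_eq_mul_div, div_le_iff₀ hK0]
  nlinarith [mul_le_mul_of_nonneg_right hθ (abs_nonneg (u - w))]

theorem triangle_lemma_general
    (n : ℕ)
    (Epst Eneg : Finset (Sym2 (Fin n)))
    (α β : ℝ) (hα0 : 0 < α) (hα1 : α < 1) (hβ : 0 < β) :
    ∃ δ : ℝ, 0 < δ ∧ ∃ Z : ℕ, 1 ≤ Z ∧
      ∀ i0 i1 i2 : Fin n, i0 ≠ i1 → i0 ≠ i2 → i1 ≠ i2 →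
        s(i0, i1) ∈ Epst ∪ Eneg →
        ∀ x : Fin n → ℝ,
          (∃ Ms : Fin Z → Matrix (Fin n) (Fin n) ℝ,
            (∀ s : Fin Z, Ms s = 1 ∨ (∃ e ∈ Epst, Ms s = Wpos α e) ∨
              (∃ e ∈ Eneg, Ms s = Wneg β e)) ∧
            δ * |x i0 - x i1| ≤
              |((List.ofFn Ms).prod *ᵥ x) i1 - ((List.ofFn Ms).prod *ᵥ x) i2|) ∧
          (∃ Ms : Fin Z → Matrix (Fin n) (Fin n) ℝ,
            (∀ s : Fin Z, Ms s = 1 ∨ (∃ e ∈ Epst, Ms s = Wpos α e) ∨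
              (∃ e ∈ Eneg, Ms s = Wneg β e)) ∧
            δ * |x i0 - x i2| ≤
              |((List.ofFn Ms).prod *ᵥ x) i1 - ((List.ofFn Ms).prod *ᵥ x) i2|) := by
  refine ⟨min α β / (2 + β), div_pos (lt_min hα0 hβ) (by linarith), 1, le_rfl, ?_⟩
  intro i0 i1 i2 h01 h02 h12 he x
  obtain ⟨θ, hθ, h1θ, hM⟩ :=
    exists_isStepMatrix_one_sub_smul_dmat he hα0.le hα1.le hβ.le
  have hstep : ((1 - θ • dmat s(i0, i1)) *ᵥ x) i1 - ((1 - θ • dmat s(i0, i1)) *ᵥ x) i2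
      = x i1 + θ * (x i0 - x i1) - x i2 := by
    rw [one_sub_smul_dmat_mulVec_apply_right θ h01,
      one_sub_smul_dmat_mulVec_apply_of_ne θ h02.symm h12.symm]
  refine ⟨exists_isStepMatrix_seq_one_of_le_max hM x i1 i2 ?_,
    exists_isStepMatrix_seq_one_of_le_max hM x i1 i2 ?_⟩
  · rw [hstep]
    exact div_mul_abs_sub_le_max_abs_of_two_le hθ (by linarith) _ _ _
  · rw [hstep]
    exact div_mul_abs_sub_le_max_abs_of_one_add_abs_le hθ (by linarith) _ _ _

theorem triangle_lemma
    (n : ℕ) (hn : 3 ≤ n)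
    (Epst Eneg : Finset (Sym2 (Fin n)))
    (hdisj : Disjoint Epst Eneg)
    (hloop : ∀ e ∈ Epst ∪ Eneg, ¬ e.IsDiag)
    (α β : ℝ) (hα0 : 0 < α) (hα1 : α < 1) (hβ : 0 < β) :
    ∃ δ : ℝ, 0 < δ ∧ ∃ Z : ℕ, 1 ≤ Z ∧
      ∀ i0 i1 i2 : Fin n, i0 ≠ i1 → i0 ≠ i2 → i1 ≠ i2 →
        s(i0, i1) ∈ Epst ∪ Eneg →
        ∀ x : Fin n → ℝ,
          (∃ Ms : Fin Z → Matrix (Fin n) (Fin n) ℝ,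
            (∀ s : Fin Z, Ms s = 1 ∨ (∃ e ∈ Epst, Ms s = Wpos α e) ∨
              (∃ e ∈ Eneg, Ms s = Wneg β e)) ∧
            δ * |x i0 - x i1| ≤
              |((List.ofFn Ms).prod *ᵥ x) i1 - ((List.ofFn Ms).prod *ᵥ x) i2|) ∧
          (∃ Ms : Fin Z → Matrix (Fin n) (Fin n) ℝ,
            (∀ s : Fin Z, Ms s = 1 ∨ (∃ e ∈ Epst, Ms s = Wpos α e) ∨
              (∃ e ∈ Eneg, Ms s = Wneg β e)) ∧
            δ * |x i0 - x i2| ≤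
              |((List.ofFn Ms).prod *ᵥ x) i1 - ((List.ofFn Ms).prod *ᵥ x) i2|) :=
  triangle_lemma_general n Epst Eneg α β hα0 hα1 hβ

end SignedOpinion
end
end
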